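/- arXiv:2408.10105 — 6 statements merged into one kernel-verified Lean document; each statement's English description precedes it below -/
import Mathlib

section
/- Let X be a geodesic metric space, x ∈ X a point, and β a (q,Q)-quasi-geodesic segment from z to w. If y is a closest point of (the image of) β to x, then the concatenation of a geodesic segment [x,y] with the portion of β from y to z is a (3q,Q)-quasi-geodesic. -/
/-!
Cut the concatenation at the endpoint `y` of the geodesic. On either piece alone the bounds are
those of a geodesic or of `β`. For `w` on `[x,y]` and `p` on `β`, the choice of `y` as a closest
point gives `d(x,y) ≤ d(x,p) ≤ d(x,w) + d(w,p)`, i.e. `d(w,y) ≤ d(w,p)`; hence `d(y,p) ≤ 2 d(w,p)`,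
and the quasi-geodesic lower bound for `β` between `y` and `p` controls the parameter distance by
`d(w,p)`, at the cost of the factor `3` in the multiplicative constant.
-/

open Metric Set Filter

def QGeo {X : Type*} [MetricSpace X] (q Q : ℝ) (s : Set ℝ) (α : ℝ → X) : Prop :=
  ∀ ⦃t u : ℝ⦄, t ∈ s → u ∈ s →
    |t - u| / q - Q ≤ dist (α t) (α u) ∧ dist (α t) (α u) ≤ q * |t - u| + Q

def GeodesicSpace (X : Type*) [MetricSpace X] : Prop :=
  ∀ x y : X, ∃ g : ℝ → X, g 0 = x ∧ g (dist x y) = y ∧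
    ∀ s t : ℝ, s ∈ Set.Icc 0 (dist x y) → t ∈ Set.Icc 0 (dist x y) →
      dist (g s) (g t) = |s - t|

def GeodesicRay {X : Type*} [MetricSpace X] (o : X) (a : ℝ → X) : Prop :=
  a 0 = o ∧ ∀ s t : ℝ, 0 ≤ s → 0 ≤ t → dist (a s) (a t) = |s - t|

noncomputable def exitTime {X : Type*} [MetricSpace X] (o : X) (α : ℝ → X) (r : ℝ) : ℝ :=
  sInf {t : ℝ | 0 ≤ t ∧ r ≤ dist o (α t)}

namespace QGeo

variable {X : Type*} [MetricSpace X] {q q' Q : ℝ} {s s' : Set ℝ} {α : ℝ → X}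

theorem of_le
    (h : ∀ ⦃t u : ℝ⦄, t ∈ s → u ∈ s → t ≤ u →
      |t - u| / q - Q ≤ dist (α t) (α u) ∧ dist (α t) (α u) ≤ q * |t - u| + Q) :
    QGeo q Q s α := by
  intro t u ht hu
  rcases le_total t u with htu | hut
  · exact h ht hu htu
  · rw [dist_comm, abs_sub_comm]
    exact h hu ht hut

theorem of_dist_eq_abs (hq : 1 ≤ q) (hQ : 0 ≤ Q)
    (hα : ∀ t u : ℝ, t ∈ s → u ∈ s → dist (α t) (α u) = |t - u|) : QGeo q Q s α := by
  intro t u ht hu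
  rw [hα t u ht hu]
  have habs := abs_nonneg (t - u)
  constructor
  · linarith [div_le_self habs hq]
  · nlinarith

theorem mono (hα : QGeo q Q s α) (hq : 0 < q) (hqq' : q ≤ q') : QGeo q' Q s α := by
  intro t u ht hu
  have habs := abs_nonneg (t - u)
  obtain ⟨hlo, hhi⟩ := hα ht hu
  constructor
  · linarith [div_le_div_of_nonneg_left habs hq hqq']
  · nlinarith

theorem comp_isometry (hα : QGeo q Q s α) {f : ℝ → ℝ} (hf : Isometry f) (hfs : MapsTo f s' s) :
    QGeo q Q s' (α ∘ f) := by
  intro t u ht hu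
  have hfd : |f t - f u| = |t - u| := by simpa only [Real.dist_eq] using hf.dist_eq t u
  simpa only [Function.comp_apply, hfd] using hα (hfs ht) (hfs hu)

end QGeo

theorem dist_bounds_of_dist_le_of_mem_geodesic {X : Type*} [MetricSpace X] {x y w p : X}
    {q Q r : ℝ} (hq : 1 ≤ q) (hQ : 0 ≤ Q) (hr : 0 ≤ r)
    (hw : dist x w + dist w y = dist x y) (hp : dist x y ≤ dist x p)
    (hlo : r / q - Q ≤ dist y p) (hhi : dist y p ≤ q * r + Q) :
    (dist w y + r) / (3 * q) - Q ≤ dist w p ∧ dist w p ≤ 3 * q * (dist w y + r) + Q := by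
  have hq0 : 0 < q := by linarith
  have hwy_le : dist w y ≤ dist w p := by linarith [dist_triangle x w p]
  have hyp_le : dist y p ≤ 2 * dist w p := by linarith [dist_triangle_left y p w]
  have hr_le : r ≤ q * (2 * dist w p + Q) := (div_le_iff₀' hq0).1 (by linarith)
  have hwy := dist_nonneg (x := w) (y := y)
  constructor
  · rw [sub_le_iff_le_add, div_le_iff₀ (by positivity)]
    nlinarith [dist_nonneg (x := w) (y := p)]
  · nlinarith [dist_triangle w y p]

theorem QGeo.geodesic_concat_of_closest {X : Type*} [MetricSpace X] {g γ : ℝ → X} {q Q d e : ℝ}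
    (hq : 1 ≤ q) (hQ : 0 ≤ Q)
    (hg : ∀ s t : ℝ, s ∈ Icc 0 d → t ∈ Icc 0 d → dist (g s) (g t) = |s - t|)
    (hγ : QGeo q Q (Icc d e) γ) (hγd : γ d = g d)
    (hclosest : ∀ t ∈ Icc d e, dist (g 0) (g d) ≤ dist (g 0) (γ t)) :
    QGeo (3 * q) Q (Icc 0 e) (fun t => if t ≤ d then g t else γ t) := by
  have h3q : 1 ≤ 3 * q := by linarith
  refine QGeo.of_le fun t u ht hu htu => ?_
  rcases le_or_gt u d with hud | hdu
  · simp only [if_pos (htu.trans hud), if_pos hud]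
    exact QGeo.of_dist_eq_abs h3q hQ hg ⟨ht.1, htu.trans hud⟩ ⟨hu.1, hud⟩
  rcases le_or_gt t d with htd | hdt
  · have hd0 : 0 ≤ d := ht.1.trans htd
    have hgdist : ∀ {s t}, 0 ≤ s → s ≤ t → t ≤ d → dist (g s) (g t) = t - s := fun hs hst htd' => by
      rw [hg _ _ ⟨hs, hst.trans htd'⟩ ⟨hs.trans hst, htd'⟩, abs_sub_comm, abs_of_nonneg (by linarith)]
    have hγu := hγ ⟨le_rfl, hdu.le.trans hu.2⟩ ⟨hdu.le, hu.2⟩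
    rw [hγd, abs_sub_comm, abs_of_nonneg (by linarith)] at hγu
    have hmixed := dist_bounds_of_dist_le_of_mem_geodesic hq hQ (by linarith : 0 ≤ u - d)
      (by rw [hgdist le_rfl ht.1 htd, hgdist ht.1 htd le_rfl, hgdist le_rfl hd0 le_rfl]; ring)
      (hclosest u ⟨hdu.le, hu.2⟩) hγu.1 hγu.2
    rw [hgdist ht.1 htd le_rfl, sub_add_sub_cancel'] at hmixed
    simpa only [if_pos htd, if_neg hdu.not_ge, abs_sub_comm t u,
      abs_of_nonneg (by linarith : 0 ≤ u - t)] using hmixed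
  · simp only [if_neg hdt.not_ge, if_neg hdu.not_ge]
    exact (hγ.mono (by linarith) (by linarith)) ⟨hdt.le, ht.2⟩ ⟨hdu.le, hu.2⟩

theorem stmt2_general {X : Type*} [MetricSpace X]
    (q Q : ℝ) (hq : 1 ≤ q) (hQ : 0 ≤ Q)
    (a b : ℝ) (β : ℝ → X) (hβ : QGeo q Q (Set.Icc a b) β)
    (x : X) (c : ℝ) (hc : c ∈ Set.Icc a b)
    (hclosest : ∀ t ∈ Set.Icc a b, dist x (β c) ≤ dist x (β t))
    (g : ℝ → X) (hg0 : g 0 = x) (hgd : g (dist x (β c)) = β c)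
    (hgiso : ∀ s t : ℝ, s ∈ Set.Icc 0 (dist x (β c)) → t ∈ Set.Icc 0 (dist x (β c)) →
      dist (g s) (g t) = |s - t|) :
    QGeo (3*q) Q (Set.Icc 0 (dist x (β c) + (c - a)))
      (fun t => if t ≤ dist x (β c) then g t else β (c - (t - dist x (β c)))) := by
  set d := dist x (β c)
  have hmaps : MapsTo (fun t => c - (t - d)) (Icc d (d + (c - a))) (Icc a b) :=
    fun t ht => ⟨by linarith [ht.2], by linarith [ht.1, hc.2]⟩
  have hreflect : Isometry (fun t : ℝ => c - (t - d)) :=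
    (IsometryEquiv.subLeft c).isometry.comp (IsometryEquiv.subRight d).isometry
  refine QGeo.geodesic_concat_of_closest hq hQ hgiso (hβ.comp_isometry hreflect hmaps) ?_ ?_
  · simp [hgd]
  · intro t ht
    rw [hg0, hgd]
    exact hclosest _ (hmaps ht)

/-- concatenating a geodesic `[x,y]` (y a closest point of the quasi-geodesic
segment β to x) with the portion of β from y back to its initial point z = β a
yields a (3q,Q)-quasi-geodesic. -/
theorem stmt2 {X : Type*} [MetricSpace X] (hX : GeodesicSpace X)
    (q Q : ℝ) (hq : 1 ≤ q) (hQ : 0 ≤ Q)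
    (a b : ℝ) (hab : a ≤ b) (β : ℝ → X) (hβ : QGeo q Q (Set.Icc a b) β)
    (x : X) (c : ℝ) (hc : c ∈ Set.Icc a b)
    (hclosest : ∀ t ∈ Set.Icc a b, dist x (β c) ≤ dist x (β t))
    (g : ℝ → X) (hg0 : g 0 = x) (hgd : g (dist x (β c)) = β c)
    (hgiso : ∀ s t : ℝ, s ∈ Set.Icc 0 (dist x (β c)) → t ∈ Set.Icc 0 (dist x (β c)) →
      dist (g s) (g t) = |s - t|) :
    QGeo (3*q) Q (Set.Icc 0 (dist x (β c) + (c - a)))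
      (fun t => if t ≤ dist x (β c) then g t else β (c - (t - dist x (β c)))) :=
  stmt2_general q Q hq hQ a b β hβ x c hc hclosest g hg0 hgd hgiso
end

section
/- Let α : [0,∞) → X be a (q,Q)-quasi-geodesic ray and β : [a,b] → X a finite (q,Q)-quasi-geodesic segment in a proper geodesic metric space. Then there exists s₀ ≥ 0 such that for every s ≥ s₀, if s_γ ∈ [s,∞) and t_γ ∈ [a,b] are chosen so that a geodesic [β(t_γ), α(s_γ)] realizes the set distance between α([s,∞)) and β([a,b]), then the concatenation β([a,t_γ]) ∪ [β(t_γ),α(s_γ)] ∪ α([s_γ,∞)) is a (4q,3Q)-quasi-geodesic. -/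
open Metric Set Filter

set_option maxHeartbeats 4000000

/-- surgery of a quasi-geodesic segment onto a quasi-geodesic ray along a
geodesic realizing the set distance yields a (4q,3Q)-quasi-geodesic, for all
sufficiently large s. -/
theorem stmt4 {X : Type*} [MetricSpace X] [ProperSpace X] (hX : GeodesicSpace X)
    (q Q : ℝ) (hq : 1 ≤ q) (hQ : 0 ≤ Q)
    (α : ℝ → X) (hα : QGeo q Q (Set.Ici 0) α)
    (a b : ℝ) (hab : a ≤ b) (β : ℝ → X) (hβ : QGeo q Q (Set.Icc a b) β) :
    ∃ s₀ : ℝ, 0 ≤ s₀ ∧ ∀ s ≥ s₀, ∀ sγ tγ : ℝ, s ≤ sγ → tγ ∈ Set.Icc a b →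
      (∀ u ∈ Set.Ici s, ∀ v ∈ Set.Icc a b, dist (β tγ) (α sγ) ≤ dist (α u) (β v)) →
      ∀ g : ℝ → X, g 0 = β tγ → g (dist (β tγ) (α sγ)) = α sγ →
        (∀ u v : ℝ, u ∈ Set.Icc 0 (dist (β tγ) (α sγ)) →
          v ∈ Set.Icc 0 (dist (β tγ) (α sγ)) → dist (g u) (g v) = |u - v|) →
      QGeo (4*q) (3*Q) (Set.Ici a)
        (fun t => if t ≤ tγ then β t
          else if t ≤ tγ + dist (β tγ) (α sγ) then g (t - tγ)
          else α (sγ + (t - tγ - dist (β tγ) (α sγ)))) := by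
  have hq0 : (0:ℝ) < q := lt_of_lt_of_le one_pos hq
  set C₀ := dist (α 0) (β a) with hC₀
  have hC₀0 : 0 ≤ C₀ := dist_nonneg
  have hba : 0 ≤ b - a := by linarith
  have hX0 : 0 ≤ 2*Q + C₀ + 3*q*(b-a) + 1 := by nlinarith [mul_nonneg hq0.le hba]
  refine ⟨q * (2*Q + C₀ + 3*q*(b-a) + 1), mul_nonneg hq0.le hX0, ?_⟩
  intro s hs sγ tγ hssγ htγ hmin g hg0 hgD hgiso
  obtain ⟨htγa, htγb⟩ := htγ
  set D := dist (β tγ) (α sγ) with hDdef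
  have hD0 : 0 ≤ D := dist_nonneg
  have hs0 : 0 ≤ s := le_trans (mul_nonneg hq0.le hX0) hs
  have hsγ0 : 0 ≤ sγ := le_trans hs0 hssγ
  -- quasi-geodesic helper bounds
  have hβub : ∀ x y, a ≤ x → x ≤ y → y ≤ b → dist (β x) (β y) ≤ q*(y-x) + Q := by
    intro x y h1 h2 h3
    have := (hβ ⟨h1, le_trans h2 h3⟩ ⟨le_trans h1 h2, h3⟩).2
    rwa [abs_of_nonpos (by linarith), neg_sub] at this
  have hβlb : ∀ x y, a ≤ x → x ≤ y → y ≤ b → y - x ≤ q * dist (β x) (β y) + q*Q := by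
    intro x y h1 h2 h3
    have h := (hβ ⟨h1, le_trans h2 h3⟩ ⟨le_trans h1 h2, h3⟩).1
    rw [abs_of_nonpos (by linarith), neg_sub] at h
    have h4 : (y - x)/q ≤ dist (β x) (β y) + Q := by linarith
    rw [div_le_iff₀ hq0] at h4
    nlinarith
  have hαub : ∀ x y, (0:ℝ) ≤ x → x ≤ y → dist (α x) (α y) ≤ q*(y-x) + Q := by
    intro x y h1 h2
    have := (hα (Set.mem_Ici.mpr h1) (Set.mem_Ici.mpr (le_trans h1 h2))).2
    rwa [abs_of_nonpos (by linarith), neg_sub] at this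
  have hαlb : ∀ x y, (0:ℝ) ≤ x → x ≤ y → y - x ≤ q * dist (α x) (α y) + q*Q := by
    intro x y h1 h2
    have h := (hα (Set.mem_Ici.mpr h1) (Set.mem_Ici.mpr (le_trans h1 h2))).1
    rw [abs_of_nonpos (by linarith), neg_sub] at h
    have h4 : (y - x)/q ≤ dist (α x) (α y) + Q := by linarith
    rw [div_le_iff₀ hq0] at h4
    nlinarith
  -- D is large
  have hD2 : 2*q*(b-a) + 1 ≤ D := by
    have h01 : dist (α 0) (β tγ) ≤ C₀ + (q*(b-a) + Q) := by
      have h1 := hβub a tγ le_rfl htγa htγb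
      have h2 := dist_triangle (α 0) (β a) (β tγ)
      nlinarith [mul_nonneg hq0.le (sub_nonneg.mpr htγb)]
    have hαl : sγ ≤ q * dist (α 0) (α sγ) + q*Q := by
      have := hαlb 0 sγ le_rfl hsγ0
      linarith
    have htri : dist (α 0) (α sγ) ≤ dist (α 0) (β tγ) + D := by
      rw [hDdef]
      exact dist_triangle (α 0) (β tγ) (α sγ)
    have hsγbig : q * (2*Q + C₀ + 3*q*(b-a) + 1) ≤ sγ := le_trans hs hssγ
    nlinarith [mul_nonneg hq0.le hQ, mul_nonneg hq0.le hC₀0]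
  set γ : ℝ → X := fun t => if t ≤ tγ then β t
      else if t ≤ tγ + D then g (t - tγ)
      else α (sγ + (t - tγ - D)) with hγ
  have hγβ : ∀ x, x ≤ tγ → γ x = β x := by
    intro x h; rw [hγ]; simp only [if_pos h]
  have hγg : ∀ x, tγ < x → x ≤ tγ + D → γ x = g (x - tγ) := by
    intro x h1 h2; rw [hγ]; simp only [if_neg (not_le.mpr h1), if_pos h2]
  have hγα : ∀ x, tγ + D < x → γ x = α (sγ + (x - tγ - D)) := by
    intro x h1
    rw [hγ]
    simp only [if_neg (not_le.mpr (by linarith : tγ < x)), if_neg (not_le.mpr h1)]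
  have hgg : ∀ v w, 0 ≤ v → v ≤ D → 0 ≤ w → w ≤ D → dist (g v) (g w) = |v - w| :=
    fun v w h1 h2 h3 h4 => hgiso v w ⟨h1, h2⟩ ⟨h3, h4⟩
  have hgend : ∀ v, 0 ≤ v → v ≤ D → dist (g v) (α sγ) = D - v := by
    intro v h1 h2
    rw [← hgD, hgg v D h1 h2 hD0 le_rfl, abs_of_nonpos (by linarith), neg_sub]
  have hgstart : ∀ v, 0 ≤ v → v ≤ D → dist (β tγ) (g v) = v := by
    intro v h1 h2
    rw [← hg0, hgg 0 v le_rfl hD0 h1 h2, zero_sub, abs_neg, abs_of_nonneg h1]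
  have h4q : (0:ℝ) < 4*q := by linarith
  have key : ∀ t u, a ≤ t → t ≤ u →
      (u - t) / (4*q) - 3*Q ≤ dist (γ t) (γ u) ∧ dist (γ t) (γ u) ≤ 4*q*(u-t) + 3*Q := by
    intro t u ht htu
    have hau : a ≤ u := le_trans ht htu
    rcases le_or_gt t tγ with ht1 | ht1
    · rcases le_or_gt u tγ with hu1 | hu1
      · -- Case 1 : both on β
        rw [hγβ t ht1, hγβ u hu1]
        have hub := hβub t u ht htu (le_trans hu1 htγb)
        have hlb := hβlb t u ht htu (le_trans hu1 htγb)
        constructor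
        · rw [sub_le_iff_le_add, div_le_iff₀ h4q]
          nlinarith [dist_nonneg (x := β t) (y := β u), mul_nonneg hq0.le hQ]
        · nlinarith [mul_nonneg hq0.le (by linarith : (0:ℝ) ≤ u - t)]
      · rcases le_or_gt u (tγ + D) with hu2 | hu2
        · -- Case 2 : t on β, u on the geodesic g
          rw [hγβ t ht1, hγg u hu1 hu2]
          set v := u - tγ with hv
          have hv0 : 0 ≤ v := by simp [hv]; linarith
          have hvD : v ≤ D := by simp [hv]; linarith
          set d := dist (β t) (g v) with hd
          have hd0 : 0 ≤ d := dist_nonneg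
          have htab : t ∈ Set.Icc a b := ⟨ht, le_trans ht1 htγb⟩
          -- d ≥ v
          have f1 : D ≤ dist (α sγ) (β t) := hmin sγ (Set.mem_Ici.mpr hssγ) t htab
          have f2 : dist (α sγ) (β t) ≤ (D - v) + d := by
            have h5 := dist_triangle (α sγ) (g v) (β t)
            rw [dist_comm (α sγ) (g v), hgend v hv0 hvD, dist_comm (g v) (β t)] at h5
            linarith
          have hvd : v ≤ d := by linarith
          -- tγ - t ≤ q*(d+v) + q*Q
          have f3 : dist (β t) (β tγ) ≤ d + v := by
            have h5 := dist_triangle (β t) (g v) (β tγ)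
            rw [dist_comm (g v) (β tγ), hgstart v hv0 hvD] at h5
            linarith
          have f4 : tγ - t ≤ q * (d + v) + q*Q := by
            have h5 := hβlb t tγ ht ht1 htγb
            nlinarith
          have f5 : dist (β t) (g v) ≤ dist (β t) (β tγ) + v := by
            have h5 := dist_triangle (β t) (β tγ) (g v)
            rw [hgstart v hv0 hvD] at h5
            linarith
          have f6 := hβub t tγ ht ht1 htγb
          constructor
          · rw [sub_le_iff_le_add, div_le_iff₀ h4q]
            nlinarith [mul_nonneg hq0.le (by linarith : (0:ℝ) ≤ d - v),
              mul_nonneg hq0.le hd0, mul_nonneg hq0.le hQ,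
              mul_nonneg (by linarith : (0:ℝ) ≤ q - 1) hd0]
          · nlinarith [mul_nonneg hq0.le (by linarith : (0:ℝ) ≤ tγ - t),
              mul_nonneg (by linarith : (0:ℝ) ≤ q - 1) hv0,
              mul_nonneg hq0.le hv0]
        · -- Case 3 : t on β, u on the ray α
          rw [hγβ t ht1, hγα u hu2]
          set w := u - tγ - D with hw
          have hw0 : 0 ≤ w := by simp [hw]; linarith
          set m := tγ - t with hm
          have hm0 : 0 ≤ m := by simp [hm]; linarith
          have hmba : m ≤ b - a := by simp [hm]; linarith
          set d := dist (β t) (α (sγ + w)) with hd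
          have hd0 : 0 ≤ d := dist_nonneg
          have htab : t ∈ Set.Icc a b := ⟨ht, le_trans ht1 htγb⟩
          have fD : D ≤ d := by
            have := hmin (sγ + w) (Set.mem_Ici.mpr (by linarith)) t htab
            rw [hd, dist_comm]
            exact this
          have fβ : dist (β t) (β tγ) ≤ q*m + Q := by
            have := hβub t tγ ht ht1 htγb
            simp [hm]; linarith
          have fw : w ≤ q * dist (α sγ) (α (sγ + w)) + q*Q := by
            have := hαlb sγ (sγ + w) hsγ0 (by linarith)
            simpa using this
          have ftri : dist (α sγ) (α (sγ + w)) ≤ D + (q*m + Q) + d := by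
            have h5 := dist_triangle (α sγ) (β tγ) (β t)
            have h6 := dist_triangle (α sγ) (β t) (α (sγ + w))
            rw [dist_comm (α sγ) (β tγ)] at h5
            rw [dist_comm (β tγ) (β t)] at h5
            nlinarith [fβ]
          have fw2 : w ≤ 2*q*d + q*q*m + 2*q*Q + q*Q := by
            nlinarith [mul_nonneg hq0.le (by linarith : (0:ℝ) ≤ d - D)]
          have fDm : 2*q*m + 1 ≤ D := by
            nlinarith [mul_nonneg hq0.le (by linarith : (0:ℝ) ≤ b - a - m)]
          constructor
          · rw [sub_le_iff_le_add, div_le_iff₀ h4q]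
            have hprod1 : 0 ≤ (2*q - 1) * (d - 2*q*m - 1) := by
              apply mul_nonneg (by linarith)
              linarith
            have hprod2 : 0 ≤ m * ((3*q+1) * (q-1)) := by
              apply mul_nonneg hm0
              apply mul_nonneg (by linarith) (by linarith)
            nlinarith [mul_nonneg hq0.le hQ, mul_nonneg hq0.le hd0]
          · have fub : d ≤ (q*m + Q) + D + (q*w + Q) := by
              have h5 := dist_triangle (β t) (β tγ) (α sγ)
              rw [← hDdef] at h5
              have h6 := dist_triangle (β t) (α sγ) (α (sγ + w))
              have h7 := hαub sγ (sγ + w) hsγ0 (by linarith)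
              have h8 : dist (α sγ) (α (sγ + w)) ≤ q*w + Q := by
                rwa [add_sub_cancel_left] at h7
              linarith [fβ]
            have huteq : u - t = m + D + w := by rw [hm, hw]; ring
            rw [huteq]
            nlinarith [mul_nonneg hq0.le hm0, mul_nonneg hq0.le hw0,
              mul_nonneg (by linarith : (0:ℝ) ≤ 4*q - 1) hD0,
              mul_nonneg hq0.le hD0]
    · rcases le_or_gt t (tγ + D) with ht2 | ht2
      · rcases le_or_gt u (tγ + D) with hu2 | hu2
        · -- Case 4 : both on the geodesic g
          have hu1 : tγ < u := lt_of_lt_of_le ht1 htu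
          rw [hγg t ht1 ht2, hγg u hu1 hu2]
          rw [hgg (t - tγ) (u - tγ) (by linarith) (by linarith) (by linarith) (by linarith)]
          rw [show t - tγ - (u - tγ) = t - u by ring, abs_of_nonpos (by linarith), neg_sub]
          constructor
          · rw [sub_le_iff_le_add, div_le_iff₀ h4q]
            nlinarith [mul_nonneg hq0.le (by linarith : (0:ℝ) ≤ u - t)]
          · nlinarith [mul_nonneg (by linarith : (0:ℝ) ≤ 4*q - 1) (by linarith : (0:ℝ) ≤ u - t)]
        · -- Case 5 : t on the geodesic g, u on the ray α
          rw [hγg t ht1 ht2, hγα u hu2]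
          set v := t - tγ with hv
          have hv0 : 0 ≤ v := by simp [hv]; linarith
          have hvD : v ≤ D := by simp [hv]; linarith
          set w := u - tγ - D with hw
          have hw0 : 0 ≤ w := by simp [hw]; linarith
          set e := D - v with he
          have he0 : 0 ≤ e := by simp [he]; linarith
          set d := dist (g v) (α (sγ + w)) with hd
          have hd0 : 0 ≤ d := dist_nonneg
          have fend : dist (g v) (α sγ) = e := hgend v hv0 hvD
          have fed : e ≤ d := by
            have h5 := hmin (sγ + w) (Set.mem_Ici.mpr (by linarith)) tγ ⟨htγa, htγb⟩
            have h6 := dist_triangle (β tγ) (g v) (α (sγ + w))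
            rw [hgstart v hv0 hvD] at h6
            rw [dist_comm] at h5
            simp only [he]
            linarith
          have fw : w ≤ q*(e + d) + q*Q := by
            have h5 := hαlb sγ (sγ + w) hsγ0 (by linarith)
            have h6 := dist_triangle (α sγ) (g v) (α (sγ + w))
            rw [dist_comm (α sγ) (g v), fend] at h6
            nlinarith
          have huteq : u - t = e + w := by rw [he, hv, hw]; ring
          rw [huteq]
          constructor
          · rw [sub_le_iff_le_add, div_le_iff₀ h4q]
            nlinarith [mul_nonneg hq0.le hQ, mul_nonneg hq0.le hd0,
              mul_nonneg (by linarith : (0:ℝ) ≤ q - 1) hd0,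
              mul_nonneg hq0.le (by linarith : (0:ℝ) ≤ d - e)]
          · have fub : d ≤ e + (q*w + Q) := by
              have h6 := dist_triangle (g v) (α sγ) (α (sγ + w))
              have h7 : dist (α sγ) (α (sγ + w)) ≤ q*w + Q := by
                have h8 := hαub sγ (sγ + w) hsγ0 (by linarith)
                rwa [add_sub_cancel_left] at h8
              rw [fend] at h6
              linarith
            nlinarith [mul_nonneg hq0.le hw0,
              mul_nonneg (by linarith : (0:ℝ) ≤ 4*q - 1) he0]
      · -- Case 6 : both on the ray α
        have hu2 : tγ + D < u := lt_of_lt_of_le ht2 htu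
        rw [hγα t ht2, hγα u hu2]
        have hx0 : (0:ℝ) ≤ sγ + (t - tγ - D) := by linarith
        have hxy : sγ + (t - tγ - D) ≤ sγ + (u - tγ - D) := by linarith
        have hub := hαub _ _ hx0 hxy
        have hlb := hαlb _ _ hx0 hxy
        have heq : sγ + (u - tγ - D) - (sγ + (t - tγ - D)) = u - t := by ring
        rw [heq] at hub hlb
        constructor
        · rw [sub_le_iff_le_add, div_le_iff₀ h4q]
          nlinarith [dist_nonneg (x := α (sγ + (t - tγ - D))) (y := α (sγ + (u - tγ - D))),
            mul_nonneg hq0.le hQ]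
        · nlinarith [mul_nonneg hq0.le (by linarith : (0:ℝ) ≤ u - t)]
  intro t u ht hu
  have ht' : a ≤ t := ht
  have hu' : a ≤ u := hu
  rcases le_total t u with h | h
  · have H := key t u ht' h
    rw [abs_of_nonpos (by linarith), neg_sub]
    exact H
  · have H := key u t hu' h
    rw [abs_of_nonneg (by linarith : (0:ℝ) ≤ t - u), dist_comm (γ t) (γ u)]
    exact H
end

section
/- The relation of quasi-redirecting is transitive: if α, β, γ are quasi-geodesic rays based at o in a geodesic metric space such that α can be (q₁,Q₁)-redirected to β at every radius r > 0, and β can be (q₂,Q₂)-redirected to γ at every radius r > 0, then α can be (q₃,Q₃)-redirected to γ at every radius r > 0, where q₃ = max{q₂+1, q₁} and Q₃ = max{Q₁, Q₂}. -/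
open Metric Set Filter

/-- `ζ` eventually coincides with `β` (up to a parameter shift). -/
def EventuallyCoincides {X : Type*} [MetricSpace X] (ζ β : ℝ → X) : Prop :=
  ∃ tβ tζ : ℝ, 0 ≤ tζ ∧ ∀ t ≥ tζ, ζ t = β (t + tβ)

/-- `α` can be (q,Q)-redirected to `β` at radius `r`: some (q,Q)-quasi-geodesic ray based at `o`
agrees with `α` up to the first exit time of `α` from the ball of radius `r` about `o`,
and eventually coincides with `β`. -/
def Redirects {X : Type*} [MetricSpace X] (o : X) (q Q r : ℝ) (α β : ℝ → X) : Prop :=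
  ∃ ζ : ℝ → X, QGeo q Q (Set.Ici 0) ζ ∧ ζ 0 = o ∧
    (∀ t ∈ Set.Icc 0 (exitTime o α r), ζ t = α t) ∧
    EventuallyCoincides ζ β

/-! Redirect `α` to `β` by `ζ₁`, which follows `β` from time `a` on. Redirect `β` to `γ` by `ζ₂` at
a radius `R` so large that `ζ₂` still follows `β` for a long stretch after `a`, and switch from
`ζ₁` to `ζ₂` at time `a`. Pairs of times on the same side of the switch, or both inside the
stretch, inherit the bounds of `ζ₁` or `ζ₂`. For a pair straddling the whole stretch, the additive
error of the triangle inequality through the switching point is paid for by the gap between the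
multiplicative constants `q₂` and `q₂ + 1`, once the stretch is long enough. -/

section QuasiGeodesic

variable {X : Type*} [MetricSpace X] {q q' Q Q' : ℝ} {s : Set ℝ} {α : ℝ → X}

theorem QGeo.bounds_of_le (h : QGeo q Q s α) {t u : ℝ} (ht : t ∈ s) (hu : u ∈ s) (htu : t ≤ u) :
    (u - t) / q - Q ≤ dist (α t) (α u) ∧ dist (α t) (α u) ≤ q * (u - t) + Q := by
  simpa only [abs_sub_comm t u, abs_of_nonneg (sub_nonneg.2 htu)] using h ht hu

theorem QGeo.of_forall_le
    (h : ∀ t ∈ s, ∀ u ∈ s, t ≤ u →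
      (u - t) / q - Q ≤ dist (α t) (α u) ∧ dist (α t) (α u) ≤ q * (u - t) + Q) :
    QGeo q Q s α := by
  intro t u ht hu
  rcases le_total t u with htu | hut
  · simpa only [abs_sub_comm t u, abs_of_nonneg (sub_nonneg.2 htu)] using h t ht u hu htu
  · simpa only [abs_of_nonneg (sub_nonneg.2 hut), dist_comm] using h u hu t ht hut

theorem QGeo.mono_s5 (h : QGeo q Q s α) (hq : 0 < q) (hqq' : q ≤ q') (hQQ' : Q ≤ Q') :
    QGeo q' Q' s α := by
  intro t u ht hu
  obtain ⟨hlo, hhi⟩ := h ht hu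
  have hdiv : |t - u| / q' ≤ |t - u| / q := div_le_div_of_nonneg_left (abs_nonneg _) hq hqq'
  have hmul : q * |t - u| ≤ q' * |t - u| := mul_le_mul_of_nonneg_right hqq' (abs_nonneg _)
  constructor <;> linarith

theorem QGeo.mono_set {s' : Set ℝ} (h : QGeo q Q s α) (hs : s' ⊆ s) : QGeo q Q s' α :=
  fun _ _ ht hu => h (hs ht) (hs hu)

theorem QGeo.comp_add_const (h : QGeo q Q s α) (c : ℝ) :
    QGeo q Q ((· + c) ⁻¹' s) (fun t => α (t + c)) := by
  intro t u ht hu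
  simpa only [add_sub_add_right_eq_sub] using h ht hu

end QuasiGeodesic

section Concatenation

variable {X : Type*}

noncomputable def concatAt (a : ℝ) (ζ ξ : ℝ → X) (t : ℝ) : X := if t ≤ a then ζ t else ξ t

theorem concatAt_of_le {a t : ℝ} {ζ ξ : ℝ → X} (ht : t ≤ a) : concatAt a ζ ξ t = ζ t := if_pos ht

theorem concatAt_of_lt {a t : ℝ} {ζ ξ : ℝ → X} (ht : a < t) : concatAt a ζ ξ t = ξ t :=
  if_neg (not_le.2 ht)

theorem concatAt_eq_left {a b t : ℝ} {ζ ξ : ℝ → X} (hagree : ∀ u ∈ Icc a b, ζ u = ξ u)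
    (ht : t ≤ b) : concatAt a ζ ξ t = ζ t := by
  rcases le_or_gt t a with hta | hat
  · exact concatAt_of_le hta
  · rw [concatAt_of_lt hat, hagree t ⟨hat.le, ht⟩]

variable [MetricSpace X] {q₁ Q₁ q₂ Q₂ q Q : ℝ}

theorem dist_le_of_concat {x y z : X} {s v : ℝ} (hq₁ : q₁ ≤ q) (hq₂ : q₂ + 1 ≤ q)
    (hs : 0 ≤ s) (hv₀ : 0 ≤ v) (hv : Q₁ + Q₂ ≤ v + Q)
    (hxy : dist x y ≤ q₁ * s + Q₁) (hyz : dist y z ≤ q₂ * v + Q₂) :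
    dist x z ≤ q * (s + v) + Q := by
  have h₁ : q₁ * s ≤ q * s := mul_le_mul_of_nonneg_right hq₁ hs
  have h₂ : (q₂ + 1) * v ≤ q * v := mul_le_mul_of_nonneg_right hq₂ hv₀
  linarith [dist_triangle x y z]

/-- The slack `v / q₂ - v / q ≥ v / (q₂ q)` absorbs the error made at the switching point. -/
theorem le_dist_of_concat {x y z : X} {a s v : ℝ} (hq₁ : 0 ≤ q₁) (hq₂ : 0 < q₂)
    (hq : q₂ + 1 ≤ q) (hQ : 0 ≤ Q) (hs : s ∈ Icc 0 a)
    (hv : q₂ * q * (Q₁ + Q₂ + (q₁ + 1) * a) ≤ v) (hv₀ : 0 ≤ v)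
    (hxy : dist x y ≤ q₁ * s + Q₁) (hyz : v / q₂ - Q₂ ≤ dist y z) :
    (s + v) / q - Q ≤ dist x z := by
  have hq₀ : 0 < q := by linarith
  have hslack : v / (q₂ * q) ≤ v / q₂ - v / q := by
    rw [div_sub_div _ _ hq₂.ne' hq₀.ne']
    gcongr
    nlinarith
  have hsq : s / q ≤ a := (div_le_self hs.1 (by linarith)).trans hs.2
  have hq₁s : q₁ * s ≤ q₁ * a := mul_le_mul_of_nonneg_left hs.2 hq₁
  have hvK : Q₁ + Q₂ + (q₁ + 1) * a ≤ v / (q₂ * q) := by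
    rwa [le_div_iff₀ (by positivity), mul_comm]
  rw [add_div]
  linarith [dist_triangle y x z, dist_comm x y]

theorem QGeo.concatAt {ζ ξ : ℝ → X} {a b : ℝ} (hq₁ : 0 < q₁) (hq₂ : 0 < q₂) (hq₁q : q₁ ≤ q)
    (hq₂q : q₂ + 1 ≤ q) (hQ₁ : 0 ≤ Q₁) (hQ₂ : 0 ≤ Q₂) (hQ₁Q : Q₁ ≤ Q) (hQ₂Q : Q₂ ≤ Q)
    (ha : 0 ≤ a) (hζ : QGeo q₁ Q₁ (Ici 0) ζ) (hξ : QGeo q₂ Q₂ (Ici a) ξ)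
    (hagree : ∀ t ∈ Icc a b, ζ t = ξ t)
    (hb : a + (q₂ * q * (Q₁ + Q₂ + (q₁ + 1) * a) + Q₁ + Q₂) ≤ b) :
    QGeo q Q (Ici 0) (concatAt a ζ ξ) := by
  refine QGeo.of_forall_le fun t ht u hu htu => ?_
  by_cases hub : u ≤ b
  · rw [concatAt_eq_left hagree hub, concatAt_eq_left hagree (htu.trans hub)]
    exact (hζ.mono_s5 hq₁ hq₁q hQ₁Q).bounds_of_le ht hu htu
  by_cases hat : a < t
  · rw [concatAt_of_lt hat, concatAt_of_lt (hat.trans_le htu)]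
    exact (hξ.mono_s5 hq₂ (by linarith) hQ₂Q).bounds_of_le hat.le (hat.le.trans htu) htu
  push Not at hub hat
  have hK : 0 ≤ q₂ * q * (Q₁ + Q₂ + (q₁ + 1) * a) := by
    have : 0 < q := by linarith
    positivity
  rw [concatAt_of_le hat, concatAt_of_lt (by linarith : a < u)]
  have ht₀ : 0 ≤ t := ht
  obtain ⟨-, hζta⟩ := hζ.bounds_of_le ht ha hat
  obtain ⟨hξlo, hξhi⟩ := hξ.bounds_of_le (le_refl a) (by linarith : a ≤ u) (by linarith)
  rw [hagree a ⟨le_rfl, by linarith⟩] at hζta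
  rw [show u - t = (a - t) + (u - a) by ring]
  exact ⟨le_dist_of_concat (a := a) hq₁.le hq₂ hq₂q (by linarith) ⟨by linarith, by linarith⟩
      (by linarith) (by linarith) hζta hξlo,
    dist_le_of_concat hq₁q hq₂q (by linarith) (by linarith) (by linarith) hζta hξhi⟩

end Concatenation

section Redirecting

variable {X : Type*} [MetricSpace X] {q Q : ℝ} {o : X} {β : ℝ → X}

theorem sub_div_le_exitTime (hq : 0 < q) (hβ : QGeo q Q (Ici 0) β) (hβ0 : β 0 = o) (R : ℝ) :
    (R - Q) / q ≤ exitTime o β R := by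
  have hbase : ∀ t, 0 ≤ t → t / q - Q ≤ dist o (β t) ∧ dist o (β t) ≤ q * t + Q := by
    intro t ht
    simpa only [hβ0, sub_zero] using hβ.bounds_of_le (le_refl (0 : ℝ)) ht ht
  refine le_csInf ⟨q * (|R| + |Q|), by positivity, ?_⟩ ?_
  · have h := (hbase (q * (|R| + |Q|)) (by positivity)).1
    rw [mul_div_cancel_left₀ _ hq.ne'] at h
    linarith [le_abs_self R, le_abs_self Q]
  · rintro t ⟨ht, hRt⟩
    rw [div_le_iff₀ hq]
    linarith [(hbase t ht).2]

theorem tendsto_exitTime_atTop (hq : 0 < q) (hβ : QGeo q Q (Ici 0) β) (hβ0 : β 0 = o) :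
    Tendsto (exitTime o β) atTop atTop :=
  tendsto_atTop_mono (sub_div_le_exitTime hq hβ hβ0)
    ((tendsto_atTop_add_const_right _ (-Q) tendsto_id).atTop_div_const hq)

theorem EventuallyCoincides.trans {ζ ξ : ℝ → X} (h₁ : EventuallyCoincides ζ ξ)
    (h₂ : EventuallyCoincides ξ β) : EventuallyCoincides ζ β := by
  obtain ⟨s₁, t₁, ht₁, h₁⟩ := h₁
  obtain ⟨s₂, t₂, -, h₂⟩ := h₂
  refine ⟨s₁ + s₂, max t₁ (t₂ - s₁), le_max_of_le_left ht₁, fun t ht => ?_⟩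
  rw [h₁ t (le_of_max_le_left ht), h₂ _ (by linarith [le_of_max_le_right ht]), add_assoc]

end Redirecting

theorem stmt5_general {X : Type*} [MetricSpace X] (o : X)
    (α β γ : ℝ → X)
    (hβ : ∃ q Q : ℝ, 1 ≤ q ∧ 0 ≤ Q ∧ QGeo q Q (Set.Ici 0) β) (hβ0 : β 0 = o)
    (q₁ Q₁ q₂ Q₂ : ℝ) (hq₁ : 1 ≤ q₁) (hQ₁ : 0 ≤ Q₁) (hq₂ : 1 ≤ q₂) (hQ₂ : 0 ≤ Q₂)
    (h1 : ∀ r > (0:ℝ), Redirects o q₁ Q₁ r α β)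
    (h2 : ∀ r > (0:ℝ), Redirects o q₂ Q₂ r β γ) :
    ∀ r > (0:ℝ), Redirects o (max (q₂ + 1) q₁) (max Q₁ Q₂) r α γ := by
  intro r hr
  obtain ⟨qβ, Qβ, hqβ, -, hβQ⟩ := hβ
  obtain ⟨ζ₁, hζ₁, hζ₁0, hζ₁α, tβ, tζ, htζ, hζ₁β⟩ := h1 r hr
  set a := max tζ (-tβ)
  have ha : 0 ≤ a := le_max_of_le_left htζ
  set b := max (exitTime o α r)
    (a + (q₂ * max (q₂ + 1) q₁ * (Q₁ + Q₂ + (q₁ + 1) * a) + Q₁ + Q₂))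
  obtain ⟨R, hbR, hR⟩ : ∃ R, b + tβ ≤ exitTime o β R ∧ 0 < R :=
    (((tendsto_exitTime_atTop (by linarith) hβQ hβ0).eventually_ge_atTop _).and
      (eventually_gt_atTop 0)).exists
  obtain ⟨ζ₂, hζ₂, -, hζ₂β, hζ₂γ⟩ := h2 R hR
  have hagree : ∀ t ∈ Icc a b, ζ₁ t = ζ₂ (t + tβ) := fun t ht => by
    rw [hζ₁β t (le_of_max_le_left ht.1),
      hζ₂β _ ⟨by linarith [le_of_max_le_right ht.1], by linarith [ht.2]⟩]
  refine ⟨concatAt a ζ₁ (fun t => ζ₂ (t + tβ)), ?_, ?_, ?_, ?_⟩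
  · refine hζ₁.concatAt (by linarith) (by linarith) (le_max_right _ _) (le_max_left _ _) hQ₁ hQ₂
      (le_max_left _ _) (le_max_right _ _) ha ((hζ₂.comp_add_const tβ).mono_set ?_) hagree
      (le_max_right _ _)
    exact fun t (ht : a ≤ t) => show 0 ≤ t + tβ by linarith [le_max_right tζ (-tβ)]
  · rw [concatAt_of_le ha, hζ₁0]
  · intro t ht
    rw [concatAt_eq_left hagree (ht.2.trans (le_max_left _ _)), hζ₁α t ht]
  · exact EventuallyCoincides.trans
      ⟨tβ, a + 1, by linarith, fun t ht => concatAt_of_lt (by linarith)⟩ hζ₂γ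

/-- transitivity of quasi-redirecting, with the explicit constants
q₃ = max (q₂+1) q₁ and Q₃ = max Q₁ Q₂. -/
theorem stmt5 {X : Type*} [MetricSpace X] (hX : GeodesicSpace X) (o : X)
    (α β γ : ℝ → X)
    (hα : ∃ q Q : ℝ, 1 ≤ q ∧ 0 ≤ Q ∧ QGeo q Q (Set.Ici 0) α) (hα0 : α 0 = o)
    (hβ : ∃ q Q : ℝ, 1 ≤ q ∧ 0 ≤ Q ∧ QGeo q Q (Set.Ici 0) β) (hβ0 : β 0 = o)
    (hγ : ∃ q Q : ℝ, 1 ≤ q ∧ 0 ≤ Q ∧ QGeo q Q (Set.Ici 0) γ) (hγ0 : γ 0 = o)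
    (q₁ Q₁ q₂ Q₂ : ℝ) (hq₁ : 1 ≤ q₁) (hQ₁ : 0 ≤ Q₁) (hq₂ : 1 ≤ q₂) (hQ₂ : 0 ≤ Q₂)
    (h1 : ∀ r > (0:ℝ), Redirects o q₁ Q₁ r α β)
    (h2 : ∀ r > (0:ℝ), Redirects o q₂ Q₂ r β γ) :
    ∀ r > (0:ℝ), Redirects o (max (q₂ + 1) q₁) (max Q₁ Q₂) r α γ :=
  stmt5_general o α β γ hβ hβ0 q₁ Q₁ q₂ Q₂ hq₁ hQ₁ hq₂ hQ₂ h1 h2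
end

section
/- The relation α ≃ β, defined by α ⪯ β and β ⪯ α (where α ⪯ β means there exists a pair (q,Q) such that α can be (q,Q)-redirected to β at every radius r > 0), is an equivalence relation on the set of quasi-geodesic rays based at o in a geodesic metric space, and the induced relation ⪯ on the set P(X) of equivalence classes is a partial order. -/
open Metric Set Filter

/-- Quasi-geodesic rays based at `o`. -/
def QRay {X : Type*} [MetricSpace X] (o : X) : Type _ :=
  {α : ℝ → X // α 0 = o ∧ ∃ q Q : ℝ, 1 ≤ q ∧ 0 ≤ Q ∧ QGeo q Q (Set.Ici 0) α}

/-- `α ⪯ β`: for some pair (q,Q), α can be (q,Q)-redirected to β at every radius. -/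
def Preceq {X : Type*} [MetricSpace X] (o : X) (α β : ℝ → X) : Prop :=
  ∃ q Q : ℝ, 1 ≤ q ∧ 0 ≤ Q ∧ ∀ r > (0:ℝ), Redirects o q Q r α β

lemma exitTime_nonneg {X : Type*} [MetricSpace X] (o : X) (α : ℝ → X) (r : ℝ) :
    0 ≤ exitTime o α r :=
  Real.sInf_nonneg (fun _ ht => ht.1)

lemma exitTime_ge {X : Type*} [MetricSpace X] {o : X} {b : ℝ → X} {qb Qb : ℝ}
    (hqb : 1 ≤ qb) (hQb : 0 ≤ Qb) (hb : QGeo qb Qb (Set.Ici 0) b) (hb0 : b 0 = o)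
    {M : ℝ} (hM : 0 ≤ M) :
    M ≤ exitTime o b (qb * M + Qb + 1) := by
  have hqb0 : (0:ℝ) < qb := lt_of_lt_of_le one_pos hqb
  set R := qb * M + Qb + 1 with hR
  have hR0 : 0 < R := by positivity
  apply le_csInf
  · refine ⟨qb * (R + Qb), ⟨by positivity, ?_⟩⟩
    have h0 : (0:ℝ) ∈ Set.Ici (0:ℝ) := Set.mem_Ici.mpr (le_refl 0)
    have h1 : qb * (R + Qb) ∈ Set.Ici (0:ℝ) := Set.mem_Ici.mpr (by positivity)
    have := (hb h0 h1).1
    have habs : |0 - qb * (R + Qb)| = qb * (R + Qb) := by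
      rw [zero_sub, abs_neg, abs_of_nonneg (by positivity)]
    rw [habs, hb0] at this
    have : qb * (R + Qb) / qb - Qb ≤ dist o (b (qb * (R + Qb))) := this
    rw [mul_div_cancel_left₀ _ (ne_of_gt hqb0)] at this
    linarith
  · rintro t ⟨ht0, htR⟩
    have h0 : (0:ℝ) ∈ Set.Ici (0:ℝ) := Set.mem_Ici.mpr (le_refl 0)
    have h1 : t ∈ Set.Ici (0:ℝ) := Set.mem_Ici.mpr ht0
    have := (hb h0 h1).2
    have habs : |0 - t| = t := by rw [zero_sub, abs_neg, abs_of_nonneg ht0]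
    rw [habs, hb0] at this
    have h2 : qb * M + Qb + 1 ≤ qb * t + Qb := le_trans htR this
    nlinarith

lemma qgeo_of_le {X : Type*} [MetricSpace X] {q Q : ℝ} {α : ℝ → X}
    (h : ∀ t u : ℝ, 0 ≤ t → 0 ≤ u → t ≤ u →
      (u - t) / q - Q ≤ dist (α t) (α u) ∧ dist (α t) (α u) ≤ q * (u - t) + Q) :
    QGeo q Q (Set.Ici 0) α := by
  intro t u ht hu
  have ht' : 0 ≤ t := ht
  have hu' : 0 ≤ u := hu
  rcases le_total t u with h' | h'
  · have := h t u ht' hu' h'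
    rwa [show |t - u| = u - t by rw [abs_sub_comm, abs_of_nonneg (by linarith)]]
  · have := h u t hu' ht' h'
    rw [dist_comm (α u) (α t)] at this
    rwa [show |t - u| = t - u by rw [abs_of_nonneg (by linarith)]]

set_option maxHeartbeats 2000000 in
lemma preceq_trans_aux {X : Type*} [MetricSpace X] {o : X} {a b c : ℝ → X}
    {qb Qb : ℝ} (hqb : 1 ≤ qb) (hQb : 0 ≤ Qb)
    (hbgeo : QGeo qb Qb (Set.Ici 0) b) (hb0 : b 0 = o)
    (hab : Preceq o a b) (hbc : Preceq o b c) : Preceq o a c := by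
  obtain ⟨q1, Q1, hq1, hQ1, H1⟩ := hab
  obtain ⟨q2, Q2, hq2, hQ2, H2⟩ := hbc
  have hq10 : (0:ℝ) < q1 := lt_of_lt_of_le one_pos hq1
  have hq20 : (0:ℝ) < q2 := lt_of_lt_of_le one_pos hq2
  set q : ℝ := max q1 (2 * q2) with hqdef
  have hq1q : q1 ≤ q := le_max_left _ _
  have hq2q : q2 ≤ q := le_trans (by linarith) (le_max_right _ _)
  have h2q2q : 2 * q2 ≤ q := le_max_right _ _
  have hq0 : (0:ℝ) < q := lt_of_lt_of_le hq10 hq1q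
  refine ⟨q, Q1 + Q2, le_trans hq1 hq1q, by linarith, ?_⟩
  intro r hr
  obtain ⟨ζ1, hζ1geo, hζ10, hζ1a, tβ, tζ1, htζ1, hζ1b⟩ := H1 r hr
  set e : ℝ := exitTime o a r with he
  have he0 : 0 ≤ e := exitTime_nonneg o a r
  set S' : ℝ := max tζ1 (-tβ) with hS'def
  have hS'0 : 0 ≤ S' := le_trans htζ1 (le_max_left _ _)
  have htζ1S' : tζ1 ≤ S' := le_max_left _ _
  have htβS' : -tβ ≤ S' := le_max_right _ _
  set S : ℝ := 4 * q1 * q2 * (S' + 1) + e with hSdef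
  have h4pos : (0:ℝ) ≤ 4 * q1 * q2 * (S' + 1) :=
    mul_nonneg (by positivity) (by linarith)
  have hq12 : (1:ℝ) ≤ q1 * q2 := by
    calc (1:ℝ) = 1 * 1 := by ring
    _ ≤ q1 * q2 := mul_le_mul hq1 hq2 zero_le_one (by linarith)
  have h44 : (4:ℝ) ≤ 4 * q1 * q2 := by
    have := hq12
    linarith only [this]
  have h4big : 4 * (S' + 1) ≤ 4 * q1 * q2 * (S' + 1) :=
    mul_le_mul_of_nonneg_right h44 (by linarith)
  have hS0 : 0 ≤ S := by rw [hSdef]; linarith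
  have hS'S : S' ≤ S := by rw [hSdef]; linarith
  have heS : e ≤ S := by rw [hSdef]; linarith
  have hStβ : 0 ≤ S + tβ := by linarith
  -- choose big radius R for redirecting b to c
  set M : ℝ := S + tβ + 1 with hM
  have hM0 : 0 ≤ M := by linarith
  set R : ℝ := qb * M + Qb + 1 with hR
  have hR0 : (0:ℝ) < R := by positivity
  obtain ⟨ζ2, hζ2geo, hζ20, hζ2b, tγ, tζ2, htζ2, hζ2c⟩ := H2 R hR0
  set T2 : ℝ := exitTime o b R with hT2
  have hT2M : M ≤ T2 := exitTime_ge hqb hQb hbgeo hb0 hM0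
  have hST2 : S + tβ ≤ T2 := by linarith
  -- the redirected ray
  set ζ : ℝ → X := fun t => if t ≤ S then ζ1 t else ζ2 (t + tβ) with hζdef
  have hkey : ∀ t : ℝ, S' ≤ t → t ≤ S → ζ1 t = ζ2 (t + tβ) := by
    intro t h1 h2
    have hb1 : ζ1 t = b (t + tβ) := hζ1b t (le_trans htζ1S' h1)
    have hb2 : ζ2 (t + tβ) = b (t + tβ) :=
      hζ2b (t + tβ) ⟨by linarith, le_trans (by linarith) hST2⟩
    rw [hb1, hb2]
  have hζeq1 : ∀ t : ℝ, t ≤ S → ζ t = ζ1 t := fun t h => if_pos h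
  have hζeq2 : ∀ t : ℝ, S' ≤ t → ζ t = ζ2 (t + tβ) := by
    intro t h1
    by_cases h2 : t ≤ S
    · rw [hζeq1 t h2]; exact hkey t h1 h2
    · exact if_neg h2
  refine ⟨ζ, ?_, ?_, ?_, ?_⟩
  · -- QGeo
    apply qgeo_of_le
    intro t u ht0 hu0 htu
    have hmem : ∀ x : ℝ, 0 ≤ x → x ∈ Set.Ici (0:ℝ) := fun x hx => Set.mem_Ici.mpr hx
    by_cases huS : u ≤ S
    · -- both on ζ1
      have htS : t ≤ S := le_trans htu huS
      rw [hζeq1 t htS, hζeq1 u huS]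
      have := hζ1geo (hmem t ht0) (hmem u hu0)
      have habs : |t - u| = u - t := by rw [abs_sub_comm, abs_of_nonneg (by linarith)]
      rw [habs] at this
      constructor
      · have hdiv : (u - t) / q ≤ (u - t) / q1 :=
          div_le_div_of_nonneg_left (by linarith) hq10 hq1q
        linarith [this.1]
      · have hprod : q1 * (u - t) ≤ q * (u - t) :=
          mul_le_mul_of_nonneg_right hq1q (by linarith)
        linarith only [this.2, hprod, hQ2]
    · push_neg at huS
      have huβ : 0 ≤ u + tβ := by linarith
      by_cases htS : t ≤ S
      · -- mixed case: t on ζ1, u on ζ2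
        rw [hζeq1 t htS, hζeq2 u (le_trans hS'S (le_of_lt huS))]
        have hSβ : 0 ≤ S + tβ := hStβ
        have hkS : ζ1 S = ζ2 (S + tβ) := hkey S hS'S (le_refl S)
        constructor
        · -- lower bound
          by_cases htS' : S' ≤ t
          · -- both effectively on ζ2
            have hk : ζ1 t = ζ2 (t + tβ) := hkey t htS' htS
            rw [hk]
            have htβ0 : 0 ≤ t + tβ := by linarith
            have := (hζ2geo (hmem _ htβ0) (hmem _ huβ)).1
            have habs : |t + tβ - (u + tβ)| = u - t := by
              rw [show t + tβ - (u + tβ) = t - u by ring, abs_sub_comm,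
                abs_of_nonneg (by linarith)]
            rw [habs] at this
            have hdiv : (u - t) / q ≤ (u - t) / q2 :=
              div_le_div_of_nonneg_left (by linarith) hq20 hq2q
            linarith
          · -- t is small, u is far out: radial estimate
            push_neg at htS'
            have h1 := (hζ1geo (hmem 0 (le_refl 0)) (hmem t ht0)).2
            have habs1 : |(0:ℝ) - t| = t := by rw [zero_sub, abs_neg, abs_of_nonneg ht0]
            rw [habs1, hζ10] at h1
            have h2 := (hζ2geo (hmem 0 (le_refl 0)) (hmem _ huβ)).1
            have habs2 : |(0:ℝ) - (u + tβ)| = u + tβ := by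
              rw [zero_sub, abs_neg, abs_of_nonneg huβ]
            rw [habs2, hζ20] at h2
            have htri : dist o (ζ2 (u + tβ)) ≤ dist o (ζ1 t) + dist (ζ1 t) (ζ2 (u + tβ)) :=
              dist_triangle _ _ _
            -- key numeric estimate
            have hu4 : 4 * q1 * q2 * S' ≤ u := by
              have hmono : 4 * q1 * q2 * S' ≤ 4 * q1 * q2 * (S' + 1) :=
                mul_le_mul_of_nonneg_left (by linarith) (by linarith only [h44])
              linarith only [hmono, he0, huS, hSdef.ge]
            have hnum : (u - t) / q ≤ (u + tβ) / q2 - (q1 * t + Q1) - Q2 + (Q1 + Q2) := by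
              have e1 : (u - t) / q ≤ u / (2 * q2) := by
                apply div_le_div₀ hu0 (by linarith) (by positivity) h2q2q
              have e2 : u / (2 * q2) + q1 * t ≤ (u + tβ) / q2 := by
                rw [le_div_iff₀ hq20, add_mul]
                have hhalf : u / (2 * q2) * q2 = u / 2 := by
                  field_simp
                rw [hhalf]
                have hS'le : S' ≤ q1 * q2 * S' := le_mul_of_one_le_left hS'0 hq12
                have htle : q1 * q2 * t ≤ q1 * q2 * S' :=
                  mul_le_mul_of_nonneg_left (le_of_lt htS') (by positivity)
                linarith only [hu4, hS'le, htle, htβS']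
              linarith
            linarith
        · -- upper bound
          have h1 := (hζ1geo (hmem t ht0) (hmem S hS0)).2
          have habs1 : |t - S| = S - t := by rw [abs_sub_comm, abs_of_nonneg (by linarith)]
          rw [habs1] at h1
          have h2 := (hζ2geo (hmem _ hSβ) (hmem _ huβ)).2
          have habs2 : |S + tβ - (u + tβ)| = u - S := by
            rw [show S + tβ - (u + tβ) = S - u by ring, abs_sub_comm,
              abs_of_nonneg (by linarith)]
          rw [habs2] at h2
          have htri : dist (ζ1 t) (ζ2 (u + tβ)) ≤
              dist (ζ1 t) (ζ1 S) + dist (ζ2 (S + tβ)) (ζ2 (u + tβ)) := by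
            rw [← hkS]; exact dist_triangle _ _ _
          have hp1 : q1 * (S - t) ≤ q * (S - t) :=
            mul_le_mul_of_nonneg_right hq1q (by linarith)
          have hp2 : q2 * (u - S) ≤ q * (u - S) :=
            mul_le_mul_of_nonneg_right hq2q (by linarith)
          linarith only [htri, h1, h2, hp1, hp2]
      · -- both on ζ2
        push_neg at htS
        have htβ0 : 0 ≤ t + tβ := by linarith
        rw [hζeq2 t (le_trans hS'S (le_of_lt htS)), hζeq2 u (le_trans hS'S (le_of_lt huS))]
        have := hζ2geo (hmem _ htβ0) (hmem _ huβ)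
        have habs : |t + tβ - (u + tβ)| = u - t := by
          rw [show t + tβ - (u + tβ) = t - u by ring, abs_sub_comm,
            abs_of_nonneg (by linarith)]
        rw [habs] at this
        constructor
        · have hdiv : (u - t) / q ≤ (u - t) / q2 :=
            div_le_div_of_nonneg_left (by linarith) hq20 hq2q
          linarith [this.1]
        · have hprod : q2 * (u - t) ≤ q * (u - t) :=
            mul_le_mul_of_nonneg_right hq2q (by linarith)
          linarith only [this.2, hprod, hQ1]
  · -- based at o
    rw [hζeq1 0 hS0]; exact hζ10
  · -- agrees with a up to exit time
    intro t ht
    rw [hζeq1 t (le_trans ht.2 heS)]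
    exact hζ1a t ht
  · -- eventually coincides with c
    refine ⟨tβ + tγ, max S (tζ2 - tβ) + 1, ?_, ?_⟩
    · have : (0:ℝ) ≤ max S (tζ2 - tβ) := le_trans hS0 (le_max_left _ _)
      linarith
    · intro t htt
      have h1 : S ≤ max S (tζ2 - tβ) := le_max_left _ _
      have h2 : tζ2 - tβ ≤ max S (tζ2 - tβ) := le_max_right _ _
      have hζt : ζ t = ζ2 (t + tβ) := hζeq2 t (by linarith)
      rw [hζt, hζ2c (t + tβ) (by linarith), show t + tβ + tγ = t + (tβ + tγ) by ring]

lemma preceq_refl' {X : Type*} [MetricSpace X] (o : X) (α : QRay o) :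
    Preceq o α.1 α.1 := by
  obtain ⟨hα0, q, Q, hq, hQ, hgeo⟩ := α.2
  exact ⟨q, Q, hq, hQ, fun r _ =>
    ⟨α.1, hgeo, hα0, fun t _ => rfl, 0, 0, le_refl 0, fun t _ => by rw [add_zero]⟩⟩

lemma preceq_trans' {X : Type*} [MetricSpace X] (o : X) (α β γ : QRay o)
    (h1 : Preceq o α.1 β.1) (h2 : Preceq o β.1 γ.1) : Preceq o α.1 γ.1 := by
  obtain ⟨hβ0, qb, Qb, hqb, hQb, hbgeo⟩ := β.2
  exact preceq_trans_aux hqb hQb hbgeo hβ0 h1 h2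


/-- `≃` is an equivalence relation on quasi-geodesic rays based at o, and
`⪯` descends to a partial order on the set P(X) of equivalence classes. -/
theorem stmt6 {X : Type*} [MetricSpace X] (hX : GeodesicSpace X) (o : X) :
    Equivalence (fun α β : QRay o => Preceq o α.1 β.1 ∧ Preceq o β.1 α.1) ∧
    ∃ s : Setoid (QRay o),
      (∀ α β : QRay o, s.r α β ↔ (Preceq o α.1 β.1 ∧ Preceq o β.1 α.1)) ∧
      ∃ le : Quotient s → Quotient s → Prop,
        (∀ α β : QRay o, le (Quotient.mk s α) (Quotient.mk s β) ↔ Preceq o α.1 β.1) ∧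
        IsPartialOrder (Quotient s) le := by
  have hequiv : Equivalence (fun α β : QRay o => Preceq o α.1 β.1 ∧ Preceq o β.1 α.1) := by
    refine ⟨fun α => ⟨preceq_refl' o α, preceq_refl' o α⟩, fun h => ⟨h.2, h.1⟩, ?_⟩
    intro a b c h1 h2
    exact ⟨preceq_trans' o a b c h1.1 h2.1, preceq_trans' o c b a h2.2 h1.2⟩
  refine ⟨hequiv, ⟨_, hequiv⟩, fun α β => Iff.rfl, ?_⟩
  refine ⟨Quotient.lift₂ (fun α β : QRay o => Preceq o α.1 β.1) ?_, fun α β => Iff.rfl, ?_⟩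
  · intro a b a' b' ha hb
    simp only [eq_iff_iff]
    exact ⟨fun h => preceq_trans' o a' b b' (preceq_trans' o a' a b ha.2 h) hb.1,
           fun h => preceq_trans' o a b' b (preceq_trans' o a a' b' ha.1 h) hb.2⟩
  · refine { refl := ?_, trans := ?_, antisymm := ?_ }
    · intro x
      induction x using Quotient.inductionOn with | h a =>
      exact preceq_refl' o a
    · intro x y z
      induction x using Quotient.inductionOn with | h a =>
      induction y using Quotient.inductionOn with | h b =>
      induction z using Quotient.inductionOn with | h c =>
      exact preceq_trans' o a b c
    · intro x y
      induction x using Quotient.inductionOn with | h a =>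
      induction y using Quotient.inductionOn with | h b =>
      intro h1 h2
      exact Quotient.sound ⟨h1, h2⟩
end

section
/- Let X be a finite-dimensional CAT(0) cube complex (a proper CAT(0) space) with basepoint o, and let α, β be geodesic rays from o. If there exists C > 0 such that d(o, [α(n), β(n)]) ≥ C·n for infinitely many n ∈ ℕ, then α and β are quasi-redirecting equivalent: there is a uniform pair (q,Q) (one may take (36,0)) such that for every r > 0, α can be (q,Q)-redirected to β at radius r, and symmetrically β to α. -/
open Metric Set Filter

/-- A unit-speed geodesic on `[0,L]`. -/
def UnitGeo {X : Type*} [MetricSpace X] (g : ℝ → X) (L : ℝ) : Prop :=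
  ∀ s t : ℝ, s ∈ Set.Icc 0 L → t ∈ Set.Icc 0 L → dist (g s) (g t) = |s - t|

/-- An affinely parameterized geodesic on `[0,1]`. -/
def Geodesic01 {X : Type*} [MetricSpace X] (g : ℝ → X) : Prop :=
  ∀ s t : ℝ, s ∈ Set.Icc (0:ℝ) 1 → t ∈ Set.Icc (0:ℝ) 1 →
    dist (g s) (g t) = |s - t| * dist (g 0) (g 1)

/-- CAT(0)-style convexity of the metric: the distance between two affinely
parameterized geodesics is a convex function. -/
def CAT0Convex (X : Type*) [MetricSpace X] : Prop :=
  ∀ g₁ g₂ : ℝ → X, Geodesic01 g₁ → Geodesic01 g₂ →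
    ConvexOn ℝ (Set.Icc (0:ℝ) 1) (fun t => dist (g₁ t) (g₂ t))

/-- Uniqueness of geodesics. -/
def UniqueGeodesics (X : Type*) [MetricSpace X] : Prop :=
  ∀ g₁ g₂ : ℝ → X, Geodesic01 g₁ → Geodesic01 g₂ → g₁ 0 = g₂ 0 → g₁ 1 = g₂ 1 →
    Set.EqOn g₁ g₂ (Set.Icc 0 1)

set_option maxHeartbeats 2000000 in
theorem redirect_aux {X : Type*} [MetricSpace X] (hX : GeodesicSpace X) (hconv : CAT0Convex X)
    (o : X) (α β : ℝ → X) (hα : GeodesicRay o α) (hβ : GeodesicRay o β)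
    (r : ℝ) (hr : 0 < r) (n : ℝ) (hn : 0 < n)
    (γ : ℝ → X) (hγ0 : γ 0 = α n) (hγL : γ (dist (α n) (β n)) = β n)
    (hγ : UnitGeo γ (dist (α n) (β n)))
    (hfar : ∀ t ∈ Set.Icc 0 (dist (α n) (β n)), 3/2 * r ≤ dist o (γ t)) :
    Redirects o 36 0 r α β := by
  obtain ⟨hα0, hαd⟩ := hα
  obtain ⟨hβ0, hβd⟩ := hβ
  set L := dist (α n) (β n) with hLdef
  have hL0 : 0 ≤ L := dist_nonneg
  have hdoα : ∀ t, 0 ≤ t → dist o (α t) = t := by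
    intro t ht
    rw [← hα0, hαd 0 t le_rfl ht, abs_of_nonpos (by linarith)]; ring
  have hdoβ : ∀ t, 0 ≤ t → dist o (β t) = t := by
    intro t ht
    rw [← hβ0, hβd 0 t le_rfl ht, abs_of_nonpos (by linarith)]; ring
  have hn' : dist o (α n) = n := hdoα n hn.le
  have hβn' : dist o (β n) = n := hdoβ n hn.le
  have hL2n : L ≤ 2 * n := by
    have h1 := dist_triangle (α n) o (β n)
    rw [dist_comm (α n) o, hn', hβn'] at h1
    linarith
  have hγcont : ContinuousOn γ (Set.Icc 0 L) := by
    have hlip : LipschitzOnWith 1 γ (Set.Icc 0 L) := by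
      rw [lipschitzOnWith_iff_dist_le_mul]
      intro x hx y hy
      rw [hγ x y hx hy, Real.dist_eq, NNReal.coe_one, one_mul]
    exact hlip.continuousOn
  set K := γ '' Set.Icc 0 L with hK
  have hmemK : ∀ s, s ∈ Set.Icc 0 L → γ s ∈ K := fun s hs => ⟨s, hs, rfl⟩
  have hKne : K.Nonempty := ⟨γ 0, hmemK 0 ⟨le_rfl, hL0⟩⟩
  have hKc : IsCompact K := isCompact_Icc.image_of_continuousOn hγcont
  set h : ℝ → ℝ := fun t => Metric.infDist (α t) K with hh
  set m := Metric.infDist o K with hm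
  obtain ⟨p₀, hp₀K, hp₀d⟩ := hKc.exists_infDist_eq_dist hKne o
  obtain ⟨sσ, hsσ, hp₀eq⟩ := hp₀K
  have hm_r : 3/2 * r ≤ m := by rw [hm, hp₀d, ← hp₀eq]; exact hfar sσ hsσ
  have hm0 : 0 < m := lt_of_lt_of_le (by linarith) hm_r
  have hmn : m ≤ n := by
    have h1 := Metric.infDist_le_dist_of_mem (x := o) (hmemK 0 ⟨le_rfl, hL0⟩)
    rw [hγ0, hn'] at h1
    exact h1
  -- convexity (a) : points on γ are at distance ≤ n from o
  have houp : ∀ s ∈ Set.Icc (0:ℝ) L, dist o (γ s) ≤ n := by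
    intro s hs
    rcases eq_or_lt_of_le hL0 with hLz | hLpos
    · have hs0 : s = 0 := le_antisymm (hLz ▸ hs.2) hs.1
      rw [hs0, hγ0, hn']
    · have hg1 : Geodesic01 (fun _ : ℝ => o) := by
        intro a b _ _; simp
      have hg2 : Geodesic01 (fun τ : ℝ => γ (τ * L)) := by
        intro a b ha hb
        have hmem : ∀ c : ℝ, c ∈ Set.Icc (0:ℝ) 1 → c * L ∈ Set.Icc 0 L := by
          intro c hc
          exact ⟨mul_nonneg hc.1 hL0, by nlinarith [hc.2, hc.1]⟩
        rw [hγ (a * L) (b * L) (hmem a ha) (hmem b hb)]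
        have h01 : dist (γ ((0:ℝ) * L)) (γ ((1:ℝ) * L)) = L := by
          rw [zero_mul, one_mul, hγ 0 L ⟨le_rfl, hL0⟩ ⟨hL0, le_rfl⟩,
            abs_of_nonpos (by linarith)]
          ring
        rw [show ((fun τ : ℝ => γ (τ * L)) 0) = γ ((0:ℝ) * L) from rfl,
          show ((fun τ : ℝ => γ (τ * L)) 1) = γ ((1:ℝ) * L) from rfl, h01,
          show a * L - b * L = (a - b) * L by ring, abs_mul, abs_of_nonneg hL0]
      have hcv := hconv _ _ hg1 hg2
      set τ := s / L with hτ
      have hτ0 : 0 ≤ τ := div_nonneg hs.1 hL0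
      have hτ1 : τ ≤ 1 := (div_le_one hLpos).mpr hs.2
      have hkey := hcv.2 (Set.left_mem_Icc.mpr zero_le_one) (Set.right_mem_Icc.mpr zero_le_one)
        (show (0:ℝ) ≤ 1 - τ by linarith) hτ0 (by ring)
      simp only [smul_eq_mul, mul_zero, mul_one, zero_add] at hkey
      rw [zero_mul, one_mul] at hkey
      have hτL : τ * L = s := div_mul_cancel₀ s (ne_of_gt hLpos)
      rw [hτL, hγ0, hγL, hn', hβn'] at hkey
      calc dist o (γ s) ≤ (1 - τ) * n + τ * n := hkey
        _ = n := by ring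
  -- basic infDist facts
  have h_lb : ∀ t, 0 ≤ t → m - t ≤ h t := by
    intro t ht
    have h1 : Metric.infDist o K ≤ Metric.infDist (α t) K + dist o (α t) :=
      Metric.infDist_le_infDist_add_dist
    rw [hdoα t ht] at h1
    have : m ≤ h t + t := h1
    linarith
  have h_le_dist : ∀ t s, s ∈ Set.Icc (0:ℝ) L → h t ≤ dist (α t) (γ s) :=
    fun t s hs => Metric.infDist_le_dist_of_mem (hmemK s hs)
  have h_lip : ∀ t u, 0 ≤ t → 0 ≤ u → h t ≤ h u + |t - u| := by
    intro t u ht hu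
    have h1 : Metric.infDist (α t) K ≤ Metric.infDist (α u) K + dist (α t) (α u) :=
      Metric.infDist_le_infDist_add_dist
    rw [hαd t u ht hu] at h1
    exact h1
  have hhn : h n = 0 := by
    have h1 : h n ≤ 0 := by
      have h2 := h_le_dist n 0 ⟨le_rfl, hL0⟩
      rw [hγ0, dist_self] at h2
      exact h2
    have h2 : 0 ≤ h n := Metric.infDist_nonneg
    linarith
  -- convexity (b) : h (2m) ≤ m when 2m ≤ n
  have hb_claim : 2 * m ≤ n → h (2 * m) ≤ m := by
    intro h2m
    have hg1 : Geodesic01 (fun τ : ℝ => α (τ * n)) := by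
      intro a b ha hb
      rw [hαd (a * n) (b * n) (mul_nonneg ha.1 hn.le) (mul_nonneg hb.1 hn.le)]
      have h01 : dist (α ((0:ℝ) * n)) (α ((1:ℝ) * n)) = n := by
        rw [zero_mul, one_mul, hαd 0 n le_rfl hn.le, abs_of_nonpos (by linarith)]; ring
      rw [show ((fun τ : ℝ => α (τ * n)) 0) = α ((0:ℝ) * n) from rfl,
        show ((fun τ : ℝ => α (τ * n)) 1) = α ((1:ℝ) * n) from rfl, h01,
        show a * n - b * n = (a - b) * n by ring, abs_mul, abs_of_nonneg hn.le]
    have hsσ0 : 0 ≤ sσ := hsσ.1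
    have hg2 : Geodesic01 (fun τ : ℝ => γ ((1 - τ) * sσ)) := by
      intro a b ha hb
      have hmem : ∀ c : ℝ, c ∈ Set.Icc (0:ℝ) 1 → (1 - c) * sσ ∈ Set.Icc 0 L := by
        intro c hc
        constructor
        · exact mul_nonneg (by linarith [hc.2]) hsσ0
        · nlinarith [hc.1, hsσ.2, hc.2]
      rw [hγ _ _ (hmem a ha) (hmem b hb)]
      have h01 : dist (γ ((1 - (0:ℝ)) * sσ)) (γ ((1 - (1:ℝ)) * sσ)) = sσ := by
        rw [show (1 - (0:ℝ)) * sσ = sσ by ring, show (1 - (1:ℝ)) * sσ = 0 by ring,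
          hγ sσ 0 hsσ ⟨le_rfl, hL0⟩, sub_zero, abs_of_nonneg hsσ0]
      rw [show ((fun τ : ℝ => γ ((1 - τ) * sσ)) 0) = γ ((1 - (0:ℝ)) * sσ) from rfl,
        show ((fun τ : ℝ => γ ((1 - τ) * sσ)) 1) = γ ((1 - (1:ℝ)) * sσ) from rfl, h01,
        show (1 - a) * sσ - (1 - b) * sσ = (b - a) * sσ by ring, abs_mul,
        abs_of_nonneg hsσ0, abs_sub_comm]
    have hcv := hconv _ _ hg1 hg2
    set τ := 2 * m / n with hτ
    have hτ0 : 0 ≤ τ := div_nonneg (by linarith) hn.le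
    have hτ1 : τ ≤ 1 := (div_le_one hn).mpr h2m
    have hkey := hcv.2 (Set.left_mem_Icc.mpr zero_le_one) (Set.right_mem_Icc.mpr zero_le_one)
      (show (0:ℝ) ≤ 1 - τ by linarith) hτ0 (by ring)
    simp only [smul_eq_mul, mul_zero, mul_one, zero_add] at hkey
    have hτn : τ * n = 2 * m := div_mul_cancel₀ (2 * m) (ne_of_gt hn)
    have hf0 : dist (α ((0:ℝ) * n)) (γ ((1 - (0:ℝ)) * sσ)) = m := by
      rw [show (0:ℝ) * n = 0 by ring, show (1 - (0:ℝ)) * sσ = sσ by ring, hα0, hm, hp₀d, hp₀eq]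
    have hf1 : dist (α ((1:ℝ) * n)) (γ ((1 - (1:ℝ)) * sσ)) = 0 := by
      rw [show (1:ℝ) * n = n by ring, show (1 - (1:ℝ)) * sσ = 0 by ring, hγ0, dist_self]
    rw [hf0, hf1, hτn] at hkey
    have hmem2 : (1 - τ) * sσ ∈ Set.Icc (0:ℝ) L := by
      constructor
      · exact mul_nonneg (by linarith) hsσ0
      · nlinarith [hsσ.2]
    calc h (2 * m) ≤ dist (α (2 * m)) (γ ((1 - τ) * sσ)) := h_le_dist _ _ hmem2
      _ ≤ (1 - τ) * m + τ * 0 := hkey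
      _ ≤ m := by nlinarith
  -- the surgery time T
  set S := {t : ℝ | t ∈ Set.Icc (0:ℝ) n ∧ h t ≤ t / 2} with hS
  have hSn : n ∈ S := ⟨⟨hn.le, le_rfl⟩, by rw [hhn]; linarith⟩
  have hSbdd : BddBelow S := ⟨0, fun x hx => hx.1.1⟩
  have hSne : S.Nonempty := ⟨n, hSn⟩
  set T := sInf S with hT
  have hTlow : 2/3 * m ≤ T := by
    apply le_csInf hSne
    intro t ht
    have h1 := h_lb t ht.1.1
    have h2 := ht.2
    linarith
  have hTn : T ≤ n := csInf_le hSbdd hSn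
  have hT0 : 0 < T := lt_of_lt_of_le (by linarith) hTlow
  have hTr : r ≤ T := by linarith
  have hTS_le : h T ≤ T / 2 := by
    by_contra hc
    push_neg at hc
    have hε0 : 0 < (h T - T / 2) / 2 := by linarith
    obtain ⟨t, htS, htlt⟩ := (csInf_lt_iff hSbdd hSne).mp
      (show sInf S < T + (h T - T / 2) / 2 by rw [← hT]; linarith)
    have hTt : T ≤ t := csInf_le hSbdd htS
    have hl := h_lip T t hT0.le htS.1.1
    rw [abs_of_nonpos (by linarith)] at hl
    have := htS.2
    linarith
  have hTS_ge : T / 2 ≤ h T := by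
    by_contra hc
    push_neg at hc
    set ε := min T (T / 2 - h T) with hε
    have hε0 : 0 < ε := lt_min hT0 (by linarith)
    have hεT : ε ≤ T := min_le_left _ _
    have hεδ : ε ≤ T / 2 - h T := min_le_right _ _
    have htnot : T - ε / 2 ∉ S := notMem_of_lt_csInf (by rw [← hT]; linarith) hSbdd
    have h1 : ¬ (h (T - ε / 2) ≤ (T - ε / 2) / 2) := fun hcon =>
      htnot ⟨⟨by linarith, by linarith⟩, hcon⟩
    push_neg at h1
    have h2 := h_lip (T - ε / 2) T (by linarith) hT0.le
    rw [abs_of_nonpos (by linarith)] at h2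
    linarith
  have hhT : h T = T / 2 := le_antisymm hTS_le hTS_ge
  have hhalf : ∀ t, 0 ≤ t → t ≤ T → t / 2 ≤ h t := by
    intro t ht htT
    rcases eq_or_lt_of_le htT with rfl | hlt
    · linarith
    · by_contra hc
      push_neg at hc
      exact (notMem_of_lt_csInf (by rw [← hT]; exact hlt) hSbdd) ⟨⟨ht, by linarith⟩, hc.le⟩
  have hT23 : 3 * T ≤ 2 * n := by
    have h1 := h_le_dist T 0 ⟨le_rfl, hL0⟩
    rw [hγ0, hαd T n hT0.le hn.le, abs_of_nonpos (by linarith)] at h1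
    rw [hhT] at h1
    linarith
  have hT2m : T ≤ 2 * m := by
    by_cases h2m : 2 * m ≤ n
    · exact csInf_le hSbdd ⟨⟨by linarith, h2m⟩, by linarith [hb_claim h2m]⟩
    · linarith
  -- the bridge
  obtain ⟨p, hpK, hpd⟩ := hKc.exists_infDist_eq_dist hKne (α T)
  obtain ⟨s₀, hs₀, hps⟩ := hpK
  have hdTp : dist (α T) (γ s₀) = T / 2 := by rw [hps, ← hpd, ← hhT]
  obtain ⟨b, hb0, hbL, hbiso⟩ := hX (α T) (γ s₀)
  rw [hdTp] at hbL hbiso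
  set D := T / 2 with hD
  have hD0 : 0 < D := by rw [hD]; linarith
  set W := L - s₀ with hW
  have hs₀0 : 0 ≤ s₀ := hs₀.1
  have hs₀L : s₀ ≤ L := hs₀.2
  have hW0 : 0 ≤ W := by rw [hW]; linarith
  have hbat : ∀ a, a ∈ Set.Icc (0:ℝ) D → dist (α T) (b a) = a := by
    intro a ha
    have h1 := hbiso 0 a ⟨le_rfl, hD0.le⟩ ha
    rw [hb0] at h1
    rw [h1, abs_of_nonpos (by linarith [ha.1])]
    ring
  have hpb : ∀ a, a ∈ Set.Icc (0:ℝ) D → dist (b a) (γ s₀) = D - a := by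
    intro a ha
    have h1 := hbiso a D ha ⟨hD0.le, le_rfl⟩
    rw [hbL] at h1
    rw [h1, abs_of_nonpos (by linarith [ha.2])]
    ring
  have hob : ∀ a, a ∈ Set.Icc (0:ℝ) D → dist o (b a) ≤ T + a := by
    intro a ha
    calc dist o (b a) ≤ dist o (α T) + dist (α T) (b a) := dist_triangle _ _ _
      _ = T + a := by rw [hdoα T hT0.le, hbat a ha]
  have hbγ : ∀ a, a ∈ Set.Icc (0:ℝ) D → ∀ s, s ∈ Set.Icc (0:ℝ) L →
      D - a ≤ dist (b a) (γ s) := by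
    intro a ha s hs
    have h1 : D ≤ dist (α T) (γ s) := by
      have := h_le_dist T s hs
      rw [hhT] at this
      exact this
    have h2 := dist_triangle (α T) (b a) (γ s)
    rw [hbat a ha] at h2
    linarith
  -- the redirecting quasi-geodesic
  set ζ : ℝ → X := fun t =>
    if t ≤ T then α t
    else if t ≤ T + D then b (t - T)
    else if t ≤ T + D + W then γ (s₀ + (t - T - D))
    else β (t - (T + D + W) + n) with hζ
  have hz1 : ∀ s, s ≤ T → ζ s = α s := by
    intro s hs; rw [hζ]; simp only [if_pos hs]
  have hz2 : ∀ s, T < s → s ≤ T + D → ζ s = b (s - T) := by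
    intro s h1 h2; rw [hζ]; simp only [if_neg (not_le.mpr h1), if_pos h2]
  have hz3 : ∀ s, T + D < s → s ≤ T + D + W → ζ s = γ (s₀ + (s - T - D)) := by
    intro s h1 h2; rw [hζ]
    simp only [if_neg (not_le.mpr (by linarith : T < s)), if_neg (not_le.mpr h1), if_pos h2]
  have hz4 : ∀ s, T + D + W < s → ζ s = β (s - (T + D + W) + n) := by
    intro s h1; rw [hζ]
    simp only [if_neg (not_le.mpr (by linarith : T < s)),
      if_neg (not_le.mpr (by linarith : T + D < s)), if_neg (not_le.mpr h1)]
  have hzJ3 : ζ (T + D + W) = β n := by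
    rcases eq_or_lt_of_le hW0 with hWz | hWpos
    · rw [show T + D + W = T + D by rw [← hWz]; ring]
      rw [hz2 (T + D) (by linarith) le_rfl]
      rw [show T + D - T = D by ring, hbL]
      rw [show s₀ = L by rw [hW] at hWz; linarith, hγL]
    · rw [hz3 (T + D + W) (by linarith) le_rfl]
      rw [show s₀ + (T + D + W - T - D) = L by rw [hW]; ring, hγL]
  -- the key two-sided estimate
  have key : ∀ t u : ℝ, 0 ≤ t → t ≤ u →
      (u - t) / 36 ≤ dist (ζ t) (ζ u) ∧ dist (ζ t) (ζ u) ≤ u - t := by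
    intro t u ht htu
    have hu0 : 0 ≤ u := le_trans ht htu
    rcases le_or_gt t T with h1t | h1t
    · rcases le_or_gt u T with h1u | h1u
      · -- C11 : both on α
        rw [hz1 t h1t, hz1 u h1u, hαd t u ht hu0, abs_of_nonpos (by linarith)]
        constructor <;> linarith
      · rcases le_or_gt u (T + D) with h2u | h2u
        · -- C12 : α / bridge
          rw [hz1 t h1t, hz2 u h1u h2u]
          have hmema : u - T ∈ Set.Icc (0:ℝ) D := ⟨by linarith, by linarith⟩
          have f2 := hpb (u - T) hmema
          have f1 := dist_triangle (α t) (b (u - T)) (γ s₀)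
          rw [f2] at f1
          have f4 := h_le_dist t s₀ hs₀
          have f3 := hhalf t ht h1t
          have f6 := hbat (u - T) hmema
          have f5 := dist_triangle (α t) (b (u - T)) (α T)
          rw [dist_comm (b (u - T)) (α T), f6, hαd t T ht hT0.le,
            abs_of_nonpos (by linarith)] at f5
          constructor
          · linarith
          · calc dist (α t) (b (u - T)) ≤ dist (α t) (α T) + dist (α T) (b (u - T)) :=
                dist_triangle _ _ _
              _ = (T - t) + (u - T) := by
                rw [hαd t T ht hT0.le, abs_of_nonpos (by linarith), f6]; ring
              _ = u - t := by ring
        · rcases le_or_gt u (T + D + W) with h3u | h3u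
          · -- C13 : α / seg
            rw [hz1 t h1t, hz3 u h2u h3u]
            set w := u - T - D with hw
            have hw0 : 0 < w := by linarith
            have hwW : w ≤ W := by linarith
            have hmems : s₀ + w ∈ Set.Icc (0:ℝ) L := ⟨by linarith, by linarith⟩
            have g1 : t / 2 ≤ dist (α t) (γ (s₀ + w)) :=
              le_trans (hhalf t ht h1t) (h_le_dist t (s₀ + w) hmems)
            have g2 : m - t ≤ dist (α t) (γ (s₀ + w)) :=
              le_trans (h_lb t ht) (h_le_dist t (s₀ + w) hmems)
            have g3 : dist (γ s₀) (γ (s₀ + w)) = w := by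
              rw [hγ s₀ (s₀ + w) hs₀ hmems, abs_of_nonpos (by linarith)]; ring
            have g4 : dist (α t) (γ s₀) ≤ (T - t) + D := by
              calc dist (α t) (γ s₀) ≤ dist (α t) (α T) + dist (α T) (γ s₀) :=
                  dist_triangle _ _ _
                _ = (T - t) + D := by
                  rw [hαd t T ht hT0.le, abs_of_nonpos (by linarith), hdTp, hD]; ring
            have g5 := dist_triangle (γ s₀) (α t) (γ (s₀ + w))
            rw [g3, dist_comm (γ s₀) (α t)] at g5
            constructor
            · by_cases hcase : 2 * ((T - t) + D) ≤ w
              · linarith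
              · linarith
            · calc dist (α t) (γ (s₀ + w)) ≤
                  dist (α t) (α T) + dist (α T) (γ s₀) + dist (γ s₀) (γ (s₀ + w)) :=
                    dist_triangle4 _ _ _ _
                _ = (T - t) + D + w := by
                    rw [hαd t T ht hT0.le, abs_of_nonpos (by linarith), hdTp, hD, g3]; ring
                _ = u - t := by rw [hw]; ring
          · -- C14 : α / β
            rw [hz1 t h1t, hz4 u h3u]
            set v := u - (T + D + W) + n with hv
            have hvn : n < v := by linarith
            have hv0 : 0 ≤ v := by linarith
            have k1 := dist_triangle o (α t) (β v)
            rw [hdoα t ht, hdoβ v hv0] at k1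
            have hWL : W ≤ L := by rw [hW]; linarith
            constructor
            · linarith
            · have k2 : dist (γ s₀) (γ L) = W := by
                rw [hγ s₀ L hs₀ ⟨hL0, le_rfl⟩, abs_of_nonpos (by linarith), hW]; ring
              calc dist (α t) (β v) ≤
                  dist (α t) (α T) + dist (α T) (γ s₀) + dist (γ s₀) (γ L) + dist (γ L) (β v) :=
                    by
                      have i1 := dist_triangle4 (α t) (α T) (γ s₀) (γ L)
                      have i2 := dist_triangle (α t) (γ L) (β v)
                      linarith
                _ = (T - t) + D + W + (v - n) := by
                    rw [hαd t T ht hT0.le, abs_of_nonpos (by linarith), hdTp, hD, k2, hγL,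
                      hβd n v hn.le hv0, abs_of_nonpos (by linarith)]; ring
                _ = u - t := by rw [hv]; ring
    · -- t on the bridge or later
      have h2t' : T < u := lt_of_lt_of_le h1t htu
      rcases le_or_gt t (T + D) with h2t | h2t
      · rcases le_or_gt u (T + D) with h2u | h2u
        · -- C22
          rw [hz2 t h1t h2t, hz2 u h2t' h2u]
          rw [hbiso (t - T) (u - T) ⟨by linarith, by linarith⟩ ⟨by linarith, by linarith⟩,
            abs_of_nonpos (by linarith)]
          constructor <;> linarith
        · rcases le_or_gt u (T + D + W) with h3u | h3u
          · -- C23 : bridge / seg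
            rw [hz2 t h1t h2t, hz3 u h2u h3u]
            set a := t - T with ha2
            set w := u - T - D with hw
            have hmema : a ∈ Set.Icc (0:ℝ) D := ⟨by linarith, by linarith⟩
            have hmems : s₀ + w ∈ Set.Icc (0:ℝ) L :=
              ⟨by linarith, by linarith⟩
            have q1 := hbγ a hmema (s₀ + w) hmems
            have q3 := hpb a hmema
            have q2 : dist (γ s₀) (γ (s₀ + w)) = w := by
              rw [hγ s₀ (s₀ + w) hs₀ hmems, abs_of_nonpos (by rw [hw]; linarith)]; ring
            have q4 := dist_triangle (γ s₀) (b a) (γ (s₀ + w))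
            rw [q2, dist_comm (γ s₀) (b a), q3] at q4
            constructor
            · have hwr : w = u - T - D := hw
              have har : a = t - T := ha2
              linarith
            · calc dist (b a) (γ (s₀ + w)) ≤ dist (b a) (γ s₀) + dist (γ s₀) (γ (s₀ + w)) :=
                  dist_triangle _ _ _
                _ = (D - a) + w := by rw [q3, q2]
                _ = u - t := by rw [ha2, hw]; ring
          · -- C24 : bridge / β
            rw [hz2 t h1t h2t, hz4 u h3u]
            set a := t - T with ha2
            set v := u - (T + D + W) + n with hv
            have hvn : n < v := by linarith
            have hv0 : 0 ≤ v := by linarith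
            have hmema : a ∈ Set.Icc (0:ℝ) D := ⟨by linarith, by linarith⟩
            have hA1 : D - a ≤ dist (b a) (β n) := by
              have := hbγ a hmema L ⟨hL0, le_rfl⟩
              rw [hγL] at this
              exact this
            have hgsL : dist (γ s₀) (γ L) = W := by
              rw [hγ s₀ L hs₀ ⟨hL0, le_rfl⟩, abs_of_nonpos (by linarith), hW]; ring
            have hA2 : W - (D - a) ≤ dist (b a) (β n) := by
              have i1 := dist_triangle (γ s₀) (b a) (γ L)
              rw [hgsL, dist_comm (γ s₀) (b a), hpb a hmema, hγL] at i1
              linarith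
            have hd1 : dist (b a) (β n) - (v - n) ≤ dist (b a) (β v) := by
              have i1 := dist_triangle (b a) (β v) (β n)
              rw [hβd v n hv0 hn.le, abs_of_nonneg (by linarith)] at i1
              linarith
            have hd2 : v - (T + a) ≤ dist (b a) (β v) := by
              have i1 := dist_triangle o (b a) (β v)
              rw [hdoβ v hv0] at i1
              have i2 := hob a hmema
              linarith
            constructor
            · by_cases hc : v - n ≤ dist (b a) (β n) / 2
              · have : a = t - T := ha2
                have : v = u - (T + D + W) + n := hv
                linarith
              · push_neg at hc
                have : a = t - T := ha2
                have : v = u - (T + D + W) + n := hv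
                have hDa : a ≤ D := hmema.2
                have := hD
                linarith
            · calc dist (b a) (β v) ≤
                  dist (b a) (γ s₀) + dist (γ s₀) (γ L) + dist (γ L) (β v) :=
                    dist_triangle4 _ _ _ _
                _ = (D - a) + W + (v - n) := by
                    rw [hpb a hmema, hgsL, hγL, hβd n v hn.le hv0,
                      abs_of_nonpos (by linarith)]; ring
                _ = u - t := by rw [ha2, hv]; ring
      · rcases le_or_gt t (T + D + W) with h3t | h3t
        · rcases le_or_gt u (T + D + W) with h3u | h3u
          · -- C33
            rw [hz3 t h2t h3t, hz3 u (by linarith) h3u]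
            have hm1 : s₀ + (t - T - D) ∈ Set.Icc (0:ℝ) L := ⟨by linarith, by linarith⟩
            have hm2 : s₀ + (u - T - D) ∈ Set.Icc (0:ℝ) L := ⟨by linarith, by linarith⟩
            rw [hγ _ _ hm1 hm2, abs_of_nonpos (by linarith)]
            constructor <;> linarith
          · -- C34 : seg / β
            rw [hz3 t h2t h3t, hz4 u h3u]
            set w := t - T - D with hw
            set v := u - (T + D + W) + n with hv
            have hvn : n < v := by linarith
            have hv0 : 0 ≤ v := by linarith
            have hmems : s₀ + w ∈ Set.Icc (0:ℝ) L :=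
              ⟨by linarith, by linarith⟩
            have r1 : dist (γ (s₀ + w)) (γ L) = W - w := by
              rw [hγ _ L hmems ⟨hL0, le_rfl⟩, abs_of_nonpos (by linarith), hW]
              ring
            have r2 : (W - w) - (v - n) ≤ dist (γ (s₀ + w)) (β v) := by
              have i1 := dist_triangle (γ (s₀ + w)) (β v) (β n)
              rw [hβd v n hv0 hn.le, abs_of_nonneg (by linarith)] at i1
              rw [← hγL, r1] at i1
              linarith
            have r3 : v - n ≤ dist (γ (s₀ + w)) (β v) := by
              have i1 := dist_triangle o (γ (s₀ + w)) (β v)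
              rw [hdoβ v hv0] at i1
              have i2 := houp (s₀ + w) hmems
              linarith
            constructor
            · have : w = t - T - D := hw
              have : v = u - (T + D + W) + n := hv
              linarith
            · calc dist (γ (s₀ + w)) (β v) ≤ dist (γ (s₀ + w)) (γ L) + dist (γ L) (β v) :=
                  dist_triangle _ _ _
                _ = (W - w) + (v - n) := by
                    rw [r1, hγL, hβd n v hn.le hv0, abs_of_nonpos (by linarith)]; ring
                _ = u - t := by rw [hw, hv]; ring
        · -- C44
          rw [hz4 t h3t, hz4 u (by linarith)]
          rw [hβd _ _ (by linarith) (by linarith), abs_of_nonpos (by linarith)]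
          constructor <;> linarith
  -- assemble
  refine ⟨ζ, ?_, ?_, ?_, ?_⟩
  · intro t u ht hu
    have ht' : (0:ℝ) ≤ t := ht
    have hu' : (0:ℝ) ≤ u := hu
    rcases le_total t u with htu | htu
    · obtain ⟨k1, k2⟩ := key t u ht' htu
      rw [abs_of_nonpos (by linarith)]
      constructor
      · linarith
      · linarith
    · obtain ⟨k1, k2⟩ := key u t hu' htu
      rw [dist_comm, abs_of_nonneg (by linarith)]
      constructor
      · linarith
      · linarith
  · rw [hz1 0 hT0.le, hα0]
  · intro t htmem
    have hE : exitTime o α r ≤ r := by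
      apply csInf_le ⟨0, fun x hx => hx.1⟩
      exact ⟨hr.le, by rw [hdoα r hr.le]⟩
    exact hz1 t (le_trans htmem.2 (le_trans hE hTr))
  · refine ⟨n - (T + D + W), T + D + W, by linarith, fun t htt => ?_⟩
    rcases eq_or_lt_of_le htt with heq | hlt
    · rw [← heq, hzJ3]
      congr 1
      ring
    · rw [hz4 t hlt]
      congr 1
      ring

/-- if the geodesics [α(n),β(n)] stay at distance ≥ C·n from o for infinitely
many n, then α and β are quasi-redirecting equivalent with uniform constants (36,0). -/
theorem stmt12 {X : Type*} [MetricSpace X] [ProperSpace X] (hX : GeodesicSpace X)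
    (hconv : CAT0Convex X) (huniq : UniqueGeodesics X)
    (o : X) (α β : ℝ → X) (hα : GeodesicRay o α) (hβ : GeodesicRay o β)
    (seg : ℕ → ℝ → X)
    (hseg : ∀ n : ℕ, seg n 0 = α n ∧ seg n (dist (α n) (β n)) = β n ∧
      UnitGeo (seg n) (dist (α n) (β n)))
    (C : ℝ) (hC : 0 < C)
    (hinf : ∀ N : ℕ, ∃ n ≥ N, ∀ t ∈ Set.Icc 0 (dist (α n) (β n)),
      C * n ≤ dist o (seg n t)) :
    ∀ r > (0:ℝ), Redirects o 36 0 r α β ∧ Redirects o 36 0 r β α := by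
  intro r hr
  obtain ⟨n, hnN, hfar⟩ := hinf (max 1 ⌈3 * r / (2 * C)⌉₊)
  have hn1 : 1 ≤ n := le_trans (le_max_left _ _) hnN
  have hn0 : (0:ℝ) < (n:ℝ) := by exact_mod_cast Nat.lt_of_lt_of_le Nat.zero_lt_one hn1
  have hceil : 3 * r / (2 * C) ≤ (n:ℝ) := by
    have h1 : ⌈3 * r / (2 * C)⌉₊ ≤ n := le_trans (le_max_right _ _) hnN
    exact_mod_cast Nat.ceil_le.mp h1
  have h2C : (0:ℝ) < 2 * C := by linarith
  have hCn : 3 / 2 * r ≤ C * (n:ℝ) := by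
    rw [div_le_iff₀ h2C] at hceil
    nlinarith
  obtain ⟨hs1, hs2, hs3⟩ := hseg n
  have hfar' : ∀ t ∈ Set.Icc 0 (dist (α n) (β n)), 3 / 2 * r ≤ dist o (seg n t) :=
    fun t ht => le_trans hCn (hfar t ht)
  constructor
  · exact redirect_aux hX hconv o α β hα hβ r hr n hn0 (seg n) hs1 hs2 hs3 hfar'
  · have hLba : dist (β (n:ℝ)) (α (n:ℝ)) = dist (α (n:ℝ)) (β (n:ℝ)) := dist_comm _ _
    refine redirect_aux hX hconv o β α hβ hα r hr n hn0
      (fun t => seg n (dist (α (n:ℝ)) (β (n:ℝ)) - t)) ?_ ?_ ?_ ?_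
    · show seg n (dist (α (n:ℝ)) (β (n:ℝ)) - 0) = β (n:ℝ)
      rw [sub_zero]; exact hs2
    · show seg n (dist (α (n:ℝ)) (β (n:ℝ)) - dist (β (n:ℝ)) (α (n:ℝ))) = α (n:ℝ)
      rw [hLba, sub_self]; exact hs1
    · intro s t hs ht
      rw [hLba] at hs ht
      show dist (seg n (dist (α (n:ℝ)) (β (n:ℝ)) - s)) (seg n (dist (α (n:ℝ)) (β (n:ℝ)) - t)) = |s - t|
      rw [hs3 (dist (α (n:ℝ)) (β (n:ℝ)) - s) (dist (α (n:ℝ)) (β (n:ℝ)) - t)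
        ⟨by linarith [hs.2], by linarith [hs.1]⟩ ⟨by linarith [ht.2], by linarith [ht.1]⟩]
      rw [show dist (α (n:ℝ)) (β (n:ℝ)) - s - (dist (α (n:ℝ)) (β (n:ℝ)) - t) = t - s by ring,
        abs_sub_comm]
    · intro t ht
      rw [hLba] at ht
      exact hfar' (dist (α (n:ℝ)) (β (n:ℝ)) - t) ⟨by linarith [ht.2], by linarith [ht.1]⟩
end

section
/- Let X be a proper geodesic metric space. If the geodesic segments [α(n), β(n)] between points of two geodesic rays α, β from o have an infinite subsequence all intersecting a fixed closed ball, then some subsequence of these segments converges (uniformly on compact sets, after parameterization by arc length centered at points in the ball) to a complete bi-infinite geodesic line γ, whose two half-lines are at bounded Hausdorff distance from α and β respectively in the sense that γ(∞) is the limit direction of the α(n) and γ(−∞) of the β(n). -/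
open Metric Set Filter
open Topology

/-!
If the segment `[β n, α n]` passes within `K` of `x₀` at time `c`, the triangle inequality
through `x₀` and `dist o (α n) = dist o (β n) = n` give `c ≥ n - dist o x₀ - K` and
`L - c ≥ n - dist o x₀ - K`, where `L` is the length of the segment. So after recentring at
`c` the segments exhaust `ℝ` in both directions. Extended by constants beyond their endpoints
they are 1-Lipschitz maps `ℝ → X` sending `0` into `closedBall x₀ K`; by Arzelà–Ascoli a
subsequence converges uniformly on compacta, and the limit is a geodesic line since on every
`[-T, T]` the recentred segments are eventually isometric embeddings.
-/

open Topology NNReal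

theorem isCompact_setOf_lipschitzWith {Y X : Type*} [PseudoMetricSpace Y] [MetricSpace X]
    [ProperSpace X] (L : ℝ≥0) (y₀ : Y) (x₀ : X) (K : ℝ) :
    IsCompact {f : C(Y, X) | LipschitzWith L f ∧ dist (f y₀) x₀ ≤ K} := by
  have hpi : IsCompact {f : Y → X | LipschitzWith L f ∧ dist (f y₀) x₀ ≤ K} := by
    refine (isCompact_univ_pi fun y => isCompact_closedBall x₀ (K + L * dist y y₀))
      |>.of_isClosed_subset ((isClosed_setOfPred_lipschitzWith L).inter
        (isClosed_le ((continuous_apply y₀).dist continuous_const) continuous_const)) ?_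
    rintro f ⟨hf, hf₀⟩ y -
    calc dist (f y) x₀ ≤ dist (f y) (f y₀) + dist (f y₀) x₀ := dist_triangle _ _ _
      _ ≤ L * dist y y₀ + K := add_le_add (hf.dist_le_mul y y₀) hf₀
      _ = K + L * dist y y₀ := add_comm _ _
  refine ArzelaAscoli.isCompact_of_equicontinuous _ ?_ ?_
  · convert hpi using 1
    ext f
    constructor
    · rintro ⟨g, hg, rfl⟩
      exact hg
    · intro hf
      exact ⟨⟨f, hf.1.continuous⟩, hf, rfl⟩
  · refine Metric.equicontinuous_of_continuity_modulus (fun r => L * r) ?_ _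
      fun y y' f => f.2.1.dist_le_mul y y'
    simpa using (tendsto_id (x := 𝓝 (0 : ℝ))).const_mul (L : ℝ)

theorem ContinuousMap.isometry_of_tendsto {ι Y X : Type*} [MetricSpace Y] [MetricSpace X]
    {l : Filter ι} [l.NeBot] {F : ι → C(Y, X)} {γ : C(Y, X)} (hF : Tendsto F l (𝓝 γ))
    (h : ∀ s t, ∀ᶠ k in l, dist (F k s) (F k t) = dist s t) : Isometry γ :=
  Isometry.of_dist_eq fun s t => tendsto_nhds_unique
    ((((continuous_eval_const s).tendsto γ).comp hF).dist
      (((continuous_eval_const t).tendsto γ).comp hF))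
    (tendsto_const_nhds.congr' ((h s t).mono fun _ hk => hk.symm))

noncomputable def recenter {X : Type*} (g : ℝ → X) {L : ℝ} (hL : 0 ≤ L) (c : ℝ) :
    ℝ → X :=
  fun t => IccExtend hL (fun s : Icc 0 L => g s) (c + t)

theorem recenter_apply_of_mem {X : Type*} (g : ℝ → X) {L c t : ℝ} (hL : 0 ≤ L)
    (h : c + t ∈ Icc 0 L) : recenter g hL c t = g (c + t) :=
  IccExtend_of_mem hL _ h

theorem add_mem_Icc_of_le {T c L t : ℝ} (hc : T ≤ c) (hcL : T ≤ L - c)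
    (ht : t ∈ Icc (-T) T) : c + t ∈ Icc 0 L :=
  ⟨by linarith [ht.1], by linarith [ht.2]⟩

section Geodesic

variable {X : Type*} [MetricSpace X]

theorem GeodesicRay.dist_apply {o : X} {a : ℝ → X} (ha : GeodesicRay o a) {t : ℝ}
    (ht : 0 ≤ t) : dist o (a t) = t := by
  rw [← ha.1, ha.2 0 t le_rfl ht, zero_sub, abs_neg, abs_of_nonneg ht]

namespace UnitGeo

variable {g : ℝ → X} {L c : ℝ}

theorem isometry_restrict (hg : UnitGeo g L) : Isometry (fun s : Icc 0 L => g s) :=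
  Isometry.of_dist_eq fun s t => hg s t s.2 t.2

theorem lipschitzWith_recenter (hg : UnitGeo g L) (hL : 0 ≤ L) (c : ℝ) :
    LipschitzWith 1 (recenter g hL c) := by
  have h := hg.isometry_restrict.lipschitz.comp
    ((LipschitzWith.projIcc hL).comp (isometry_add_left c).lipschitz)
  rwa [mul_one, mul_one] at h

theorem sub_le_param (hg : UnitGeo g L) (hc : c ∈ Icc 0 L) (x x₀ : X) :
    dist x (g 0) - dist x x₀ - dist x₀ (g c) ≤ c := by
  have hgc : dist (g c) (g 0) = c := by
    rw [hg c 0 hc ⟨le_rfl, hc.1.trans hc.2⟩, sub_zero, abs_of_nonneg hc.1]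
  linarith [dist_triangle4 x x₀ (g c) (g 0)]

theorem sub_le_length_sub_param (hg : UnitGeo g L) (hc : c ∈ Icc 0 L) (x x₀ : X) :
    dist x (g L) - dist x x₀ - dist x₀ (g c) ≤ L - c := by
  have hgc : dist (g c) (g L) = L - c := by
    rw [hg c L hc ⟨hc.1.trans hc.2, le_rfl⟩, abs_sub_comm, abs_of_nonneg (sub_nonneg.2 hc.2)]
  linarith [dist_triangle4 x x₀ (g c) (g L)]

theorem sub_le_min_param_of_geodesicRay {o x₀ : X} {α β : ℝ → X} (hα : GeodesicRay o α)
    (hβ : GeodesicRay o β) {r : ℝ} (hr : 0 ≤ r) (hg : UnitGeo g (dist (α r) (β r)))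
    (hg₀ : g 0 = β r) (hg₁ : g (dist (α r) (β r)) = α r)
    (hc : c ∈ Icc 0 (dist (α r) (β r))) :
    r - dist o x₀ - dist x₀ (g c) ≤ min c (dist (α r) (β r) - c) := by
  have h₀ := hg.sub_le_param hc o x₀
  have h₁ := hg.sub_le_length_sub_param hc o x₀
  rw [hg₀, hβ.dist_apply hr] at h₀
  rw [hg₁, hα.dist_apply hr] at h₁
  exact le_min h₀ h₁

end UnitGeo

theorem tendsto_min_param_atTop {o x₀ : X} {α β : ℝ → X} (hα : GeodesicRay o α)
    (hβ : GeodesicRay o β) {seg : ℕ → ℝ → X}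
    (hseg : ∀ n : ℕ, seg n 0 = β n ∧ seg n (dist (α n) (β n)) = α n ∧
      UnitGeo (seg n) (dist (α n) (β n)))
    {ι : Type*} {l : Filter ι} {n : ι → ℕ} (hn : Tendsto n l atTop) {c : ι → ℝ}
    (hc : ∀ i, c i ∈ Icc 0 (dist (α (n i)) (β (n i)))) {K : ℝ}
    (hcK : ∀ i, dist x₀ (seg (n i) (c i)) ≤ K) :
    Tendsto (fun i => min (c i) (dist (α (n i)) (β (n i)) - c i)) l atTop := by
  have hbound : ∀ i,
      (n i : ℝ) - (dist o x₀ + K) ≤ min (c i) (dist (α (n i)) (β (n i)) - c i) := by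
    intro i
    rw [← sub_sub]
    exact (sub_le_sub_left (hcK i) _).trans ((hseg (n i)).2.2.sub_le_min_param_of_geodesicRay
      hα hβ (Nat.cast_nonneg _) (hseg (n i)).1 (hseg (n i)).2.1 (hc i))
  refine tendsto_atTop_mono hbound ?_
  simpa only [sub_eq_add_neg, Function.comp_apply] using
    tendsto_atTop_add_const_right _ _ (tendsto_natCast_atTop_atTop.comp hn)

end Geodesic

theorem stmt13_general {X : Type*} [MetricSpace X] [ProperSpace X] (o : X)
    (α β : ℝ → X) (hα : GeodesicRay o α) (hβ : GeodesicRay o β)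
    (seg : ℕ → ℝ → X)
    (hseg : ∀ n : ℕ, seg n 0 = β n ∧ seg n (dist (α n) (β n)) = α n ∧
      UnitGeo (seg n) (dist (α n) (β n)))
    (x₀ : X) (K : ℝ)
    (φ : ℕ → ℕ) (hφ : StrictMono φ)
    (hball : ∀ k, ∃ t ∈ Set.Icc 0 (dist (α (φ k)) (β (φ k))), dist x₀ (seg (φ k) t) ≤ K) :
    ∃ σ : ℕ → ℕ, StrictMono σ ∧ ∃ c : ℕ → ℝ, ∃ γ : ℝ → X,
      (∀ s t : ℝ, dist (γ s) (γ t) = |s - t|) ∧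
      (∀ k, c k ∈ Set.Icc 0 (dist (α (φ (σ k))) (β (φ (σ k)))) ∧
        dist x₀ (seg (φ (σ k)) (c k)) ≤ K) ∧
      (∀ T : ℝ, ∃ N : ℕ, ∀ k ≥ N,
        T ≤ c k ∧ T ≤ dist (α (φ (σ k))) (β (φ (σ k))) - c k) ∧
      (∀ T > (0:ℝ), ∀ ε > (0:ℝ), ∃ N : ℕ, ∀ k ≥ N, ∀ t ∈ Set.Icc (-T) T,
        dist (seg (φ (σ k)) (c k + t)) (γ t) ≤ ε) := by
  choose c hc hcK using hball
  set L : ℕ → ℝ := fun k => dist (α (φ k)) (β (φ k))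
  have hL : ∀ k, 0 ≤ L k := fun k => dist_nonneg
  have hlip : ∀ k, LipschitzWith 1 (recenter (seg (φ k)) (hL k) (c k)) := fun k =>
    (hseg (φ k)).2.2.lipschitzWith_recenter (hL k) (c k)
  let F : ℕ → C(ℝ, X) := fun k =>
    ⟨recenter (seg (φ k)) (hL k) (c k), (hlip k).continuous⟩
  have hF₀ : ∀ k, F k 0 = seg (φ k) (c k) := fun k => by
    rw [← add_zero (c k)]
    exact recenter_apply_of_mem _ _ (by simpa using hc k)
  obtain ⟨γ, -, σ, hσ, hγ⟩ :=
    (isCompact_setOf_lipschitzWith 1 (0 : ℝ) x₀ K).tendsto_subseq fun k =>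
      ⟨hlip k, by rw [hF₀, dist_comm]; exact hcK k⟩
  have hlong : ∀ T, ∀ᶠ k in atTop, T ≤ c (σ k) ∧ T ≤ L (σ k) - c (σ k) := by
    have hmin := tendsto_min_param_atTop hα hβ hseg (hφ.tendsto_atTop.comp hσ.tendsto_atTop)
      (fun k => hc (σ k)) (fun k => hcK (σ k))
    intro T
    filter_upwards [hmin.eventually_ge_atTop T] with k hk
    exact ⟨hk.trans (min_le_left _ _), hk.trans (min_le_right _ _)⟩
  have hFseg : ∀ T, ∀ᶠ k in atTop, ∀ t ∈ Icc (-T) T,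
      F (σ k) t = seg (φ (σ k)) (c (σ k) + t) := fun T =>
    (hlong T).mono fun k hk t ht => recenter_apply_of_mem _ _ (add_mem_Icc_of_le hk.1 hk.2 ht)
  refine ⟨σ, hσ, c ∘ σ, γ, fun s t => ?_, fun k => ⟨hc (σ k), hcK (σ k)⟩,
    fun T => eventually_atTop.1 (hlong T), fun T _ ε hε => ?_⟩
  · refine (ContinuousMap.isometry_of_tendsto hγ fun s t => ?_).dist_eq s t
    have hs : s ∈ Icc (-max |s| |t|) (max |s| |t|) := abs_le.1 (le_max_left _ _)
    have ht : t ∈ Icc (-max |s| |t|) (max |s| |t|) := abs_le.1 (le_max_right _ _)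
    filter_upwards [hlong (max |s| |t|), hFseg (max |s| |t|)] with k hk hFk
    rw [Function.comp_apply, hFk s hs, hFk t ht, (hseg _).2.2 _ _ (add_mem_Icc_of_le hk.1 hk.2 hs)
      (add_mem_Icc_of_le hk.1 hk.2 ht), add_sub_add_left_eq_sub, Real.dist_eq]
  · have hunif := Metric.tendstoUniformlyOn_iff.1
      (ContinuousMap.tendsto_iff_forall_isCompact_tendstoUniformlyOn.1 hγ _
        (isCompact_Icc (a := -T) (b := T))) ε hε
    obtain ⟨N, hN⟩ := eventually_atTop.1 (hunif.and (hFseg T))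
    refine ⟨N, fun k hk t ht => ?_⟩
    obtain ⟨hclose, hFk⟩ := hN k hk
    rw [Function.comp_apply, ← hFk t ht, dist_comm]
    exact (hclose t ht).le

/-- if infinitely many of the geodesic segments [α(n),β(n)] meet a fixed
closed ball, then after recentering by arc length a subsequence converges uniformly on
compact sets to a complete bi-infinite geodesic line γ, whose positive direction comes
from the α(n) side and negative direction from the β(n) side. -/
theorem stmt13 {X : Type*} [MetricSpace X] [ProperSpace X] (hX : GeodesicSpace X) (o : X)
    (α β : ℝ → X) (hα : GeodesicRay o α) (hβ : GeodesicRay o β)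
    (seg : ℕ → ℝ → X)
    (hseg : ∀ n : ℕ, seg n 0 = β n ∧ seg n (dist (α n) (β n)) = α n ∧
      UnitGeo (seg n) (dist (α n) (β n)))
    (x₀ : X) (K : ℝ) (hK : 0 ≤ K)
    (φ : ℕ → ℕ) (hφ : StrictMono φ)
    (hball : ∀ k, ∃ t ∈ Set.Icc 0 (dist (α (φ k)) (β (φ k))), dist x₀ (seg (φ k) t) ≤ K) :
    ∃ σ : ℕ → ℕ, StrictMono σ ∧ ∃ c : ℕ → ℝ, ∃ γ : ℝ → X,
      (∀ s t : ℝ, dist (γ s) (γ t) = |s - t|) ∧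
      (∀ k, c k ∈ Set.Icc 0 (dist (α (φ (σ k))) (β (φ (σ k)))) ∧
        dist x₀ (seg (φ (σ k)) (c k)) ≤ K) ∧
      (∀ T : ℝ, ∃ N : ℕ, ∀ k ≥ N,
        T ≤ c k ∧ T ≤ dist (α (φ (σ k))) (β (φ (σ k))) - c k) ∧
      (∀ T > (0:ℝ), ∀ ε > (0:ℝ), ∃ N : ℕ, ∀ k ≥ N, ∀ t ∈ Set.Icc (-T) T,
        dist (seg (φ (σ k)) (c k + t)) (γ t) ≤ ε) :=
  stmt13_general o α β hα hβ seg hseg x₀ K φ hφ hball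
end
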